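/- arXiv:2106.14278 — 7 statements merged into one kernel-verified Lean document; each statement's English description precedes it below -/
import Mathlib

section
/- Let F be a field of characteristic 0 and n ≥ s ≥ 1 with p odd, such that ζ_{p^s} ∈ F and L = F(ζ_{p^n}) has degree p^l over F. Then the cyclic algebra (L/F, σ, ζ_{p^s}), where σ generates Gal(L/F), is isomorphic as an F-algebra to the matrix algebra M_{p^l}(F). -/
set_option maxHeartbeats 1600000

lemma geom_nat' {t : ℕ} (ht : 1 ≤ t) (m : ℕ) :
    (∑ j ∈ Finset.range m, t ^ j) * (t - 1) = t ^ m - 1 := by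
  have h := geom_sum_mul (t : ℤ) m
  have h1 : 1 ≤ t ^ m := Nat.one_le_pow _ _ ht
  zify [ht, h1]
  push_cast at h
  linarith


lemma NTlemma {p s n l t : ℕ} (hp : p.Prime) (hodd : Odd p) (hs : 1 ≤ s)
    (hsn : s ≤ n) (ht1 : t ≡ 1 [MOD p ^ s]) (htl : t ^ p ^ l ≡ 1 [MOD p ^ n])
    (htmin : ∀ j < l, ¬ t ^ p ^ j ≡ 1 [MOD p ^ n]) :
    ∃ S', (∑ j ∈ Finset.range (p ^ l), t ^ j) = p ^ l * S' ∧ ¬ p ∣ S' ∧ s + l ≤ n := by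
  haveI : Fact p.Prime := ⟨hp⟩
  have hp1 := hp.one_lt
  rcases Nat.eq_zero_or_pos l with rfl | hl
  · exact ⟨1, by simp, fun h => absurd (Nat.dvd_one.mp h) (by omega), by omega⟩
  · have hps1 : 1 < p ^ s := Nat.one_lt_pow (by omega) hp1
    -- t ≠ 1
    have ht_ne : t ≠ 1 := by
      intro h
      exact htmin 0 hl (by simp [h, Nat.ModEq.refl])
    have ht0 : t ≠ 0 := by
      intro h
      have := ht1
      rw [h] at this
      have : (1 : ℕ) % p ^ s = 0 % p ^ s := this.symm
      simp [Nat.mod_eq_of_lt hps1] at this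
    have ht2 : 2 ≤ t := by omega
    have hdvd_s : p ^ s ∣ t - 1 := (Nat.modEq_iff_dvd' (by omega)).mp ht1.symm
    have hpdvd : p ∣ t - 1 := dvd_trans (dvd_pow_self p (by omega)) hdvd_s
    have hnd : ¬ p ∣ t := by
      intro h
      have h2 := Nat.dvd_sub h hpdvd
      have : t - (t - 1) = 1 := by omega
      rw [this] at h2
      exact absurd (Nat.dvd_one.mp h2) (by omega)
    have key : ∀ j : ℕ, padicValNat p (t ^ p ^ j - 1) = padicValNat p (t - 1) + j := by
      intro j
      have := padicValNat.pow_sub_pow (p := p) hodd (x := t) (y := 1) (by omega)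
        (by simpa using hpdvd) hnd (n := p ^ j) (by positivity)
      simpa [padicValNat.prime_pow] using this
    set v := padicValNat p (t - 1) with hv
    have htm1 : t - 1 ≠ 0 := by omega
    have hv_s : s ≤ v := by
      rcases (padicValNat_dvd_iff (p := p) s (t - 1)).mp hdvd_s with h | h
      · exact absurd h htm1
      · exact h
    have hpow_ne : ∀ j : ℕ, t ^ p ^ j - 1 ≠ 0 := by
      intro j
      have : 1 < t ^ p ^ j := Nat.one_lt_pow (by positivity) (by omega)
      omega
    have hnle : n ≤ v + l := by
      have hd : p ^ n ∣ t ^ p ^ l - 1 :=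
        (Nat.modEq_iff_dvd' (Nat.one_le_pow _ _ (by omega))).mp htl.symm
      rcases (padicValNat_dvd_iff (p := p) n _).mp hd with h | h
      · exact absurd h (hpow_ne l)
      · rwa [key l] at h
    have hlt : v + (l - 1) < n := by
      by_contra hcon
      push_neg at hcon
      have hd : p ^ n ∣ t ^ p ^ (l - 1) - 1 :=
        (padicValNat_dvd_iff (p := p) n _).mpr (Or.inr (by rw [key]; omega))
      exact htmin (l - 1) (by omega)
        ((Nat.modEq_iff_dvd' (Nat.one_le_pow _ _ (by omega))).mpr hd).symm
    have hveq : v + l = n := by omega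
    set S := ∑ j ∈ Finset.range (p ^ l), t ^ j with hSdef
    have hS0 : S ≠ 0 := by
      have : t ^ 0 ≤ S := Finset.single_le_sum (f := fun j => t ^ j)
        (fun i _ => Nat.zero_le _) (Finset.mem_range.mpr (by positivity))
      simp at this; omega
    have hgeom : S * (t - 1) = t ^ p ^ l - 1 := geom_nat' (by omega) _
    have hSv : padicValNat p S = l := by
      have := padicValNat.mul (p := p) hS0 htm1
      rw [hgeom, key l] at this
      omega
    have hdvdS : p ^ l ∣ S := by
      rw [← hSv]; exact pow_padicValNat_dvd
    refine ⟨S / p ^ l, (Nat.mul_div_cancel' hdvdS).symm, ?_, by omega⟩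
    rintro ⟨c, hc⟩
    apply pow_succ_padicValNat_not_dvd (p := p) hS0
    rw [hSv]
    exact ⟨c, by rw [← Nat.mul_div_cancel' hdvdS, hc]; ring⟩

lemma partA (p n s l : ℕ) (hp : p.Prime) (hodd : Odd p) (hs : 1 ≤ s) (hsn : s ≤ n)
    (F L : Type) [Field F] [Field L] [Algebra F L] [CharZero F] [IsGalois F L]
    (ζs : F) (hζs : IsPrimitiveRoot ζs (p ^ s))
    (ζ : L) (hζ : IsPrimitiveRoot ζ (p ^ n))
    (hgen : IntermediateField.adjoin F {ζ} = ⊤)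
    (hdeg : Module.finrank F L = p ^ l)
    (σ : L ≃ₐ[F] L) (hσ : ∀ τ : L ≃ₐ[F] L, τ ∈ Subgroup.zpowers σ) :
    ∃ x : L, x ≠ 0 ∧ (∏ j ∈ Finset.range (p ^ l), (σ ^ j) x) * algebraMap F L ζs = 1 := by
  have hp1 := hp.one_lt
  have hppos : 0 < p := by omega
  haveI : FiniteDimensional F L :=
    FiniteDimensional.of_finrank_pos (by rw [hdeg]; positivity)
  haveI : NeZero (p ^ n) := ⟨by positivity⟩
  haveI : NeZero (p ^ s) := ⟨by positivity⟩
  have hcard : Fintype.card (L ≃ₐ[F] L) = p ^ l :=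
    Nat.card_eq_fintype_card.symm.trans ((IsGalois.card_aut_eq_finrank F L).trans hdeg)
  have hord : orderOf σ = p ^ l :=
    (orderOf_eq_card_of_forall_mem_zpowers hσ).trans
      (Nat.card_eq_fintype_card.trans hcard)
  have hcongr : ∀ a b : ℕ, a ≡ b [MOD p ^ n] → ζ ^ a = ζ ^ b := by
    have key : ∀ a b : ℕ, b ≤ a → a ≡ b [MOD p ^ n] → ζ ^ a = ζ ^ b := by
      intro a b hle h
      obtain ⟨c, hc⟩ := (Nat.modEq_iff_dvd' hle).mp h.symm
      have hac : a = b + p ^ n * c := by omega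
      rw [hac, pow_add, pow_mul, hζ.pow_eq_one, one_pow, mul_one]
    intro a b h
    rcases le_total b a with hle | hle
    · exact key a b hle h
    · exact (key b a hle h.symm).symm
  have hpowinj : ∀ a b : ℕ, ζ ^ a = ζ ^ b → a ≡ b [MOD p ^ n] := by
    intro a b h
    have hpn : 0 < p ^ n := by positivity
    have h1 : ζ ^ (a % p ^ n) = ζ ^ (b % p ^ n) :=
      (hcongr _ _ (Nat.mod_modEq a _)).trans (h.trans (hcongr _ _ (Nat.mod_modEq b _)).symm)
    have h2 := hζ.pow_inj (Nat.mod_lt _ hpn) (Nat.mod_lt _ hpn) h1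
    exact h2
  -- automorphisms are determined by their value on ζ
  have hadj : Algebra.adjoin F {ζ} = ⊤ := by
    rw [← IntermediateField.adjoin_simple_toSubalgebra_of_isAlgebraic (IsAlgebraic.of_finite F ζ)]
    rw [show IntermediateField.adjoin F {ζ} = ⊤ from hgen]
    rfl
  have hext : ∀ τ : L ≃ₐ[F] L, τ ζ = ζ → τ = 1 := by
    intro τ hτ
    have h1 : Algebra.adjoin F {ζ} ≤ AlgHom.equalizer (τ : L →ₐ[F] L) (AlgHom.id F L) :=
      Algebra.adjoin_le (Set.singleton_subset_iff.mpr hτ)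
    ext x
    exact h1 (hadj.symm ▸ Algebra.mem_top)
  set χ := hζ.autToPow F with hχ
  have hinj : Function.Injective χ := by
    intro τ τ' h
    have heq : τ ζ = τ' ζ := by
      rw [← hζ.autToPow_spec F τ, ← hζ.autToPow_spec F τ', h]
    have hfix : (τ'⁻¹ * τ) ζ = ζ := by
      rw [AlgEquiv.mul_apply, heq, ← AlgEquiv.mul_apply, inv_mul_cancel, AlgEquiv.one_apply]
    have := hext _ hfix
    rwa [inv_mul_eq_one, eq_comm] at this
  have hordw : orderOf (χ σ) = p ^ l := by
    rw [orderOf_injective χ hinj]; exact hord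
  obtain ⟨t, ht⟩ : ∃ t : ℕ, ((χ σ : (ZMod (p ^ n))ˣ) : ZMod (p ^ n)).val = t := ⟨_, rfl⟩
  have hcast : ((t : ℕ) : ZMod (p ^ n)) = ((χ σ : (ZMod (p ^ n))ˣ) : ZMod (p ^ n)) := by
    rw [← ht, ZMod.natCast_val, ZMod.cast_id]
  have hcastj : ∀ j : ℕ,
      (((χ σ) ^ j : (ZMod (p ^ n))ˣ) : ZMod (p ^ n)) = ((t ^ j : ℕ) : ZMod (p ^ n)) := by
    intro j
    push_cast
    rw [hcast]
  have hσj : ∀ j : ℕ, (σ ^ j) ζ = ζ ^ (t ^ j) := by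
    intro j
    have h1 : ζ ^ ((χ (σ ^ j) : ZMod (p ^ n)).val) = (σ ^ j) ζ := hζ.autToPow_spec F _
    rw [← h1, map_pow]
    apply hcongr
    have h2 : ((χ σ ^ j : (ZMod (p ^ n))ˣ) : ZMod (p ^ n)).val = t ^ j % p ^ n := by
      rw [hcastj j, ZMod.val_natCast]
    rw [h2]
    exact Nat.mod_modEq _ _
  have hσ1 : σ ζ = ζ ^ t := by simpa using hσj 1
  -- t ≡ 1 mod p^s
  set ι := algebraMap F L with hι
  have hζs' : IsPrimitiveRoot (ι ζs) (p ^ s) := hζs.map_of_injective (algebraMap F L).injective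
  have hη : IsPrimitiveRoot (ζ ^ (p ^ (n - s))) (p ^ s) :=
    hζ.pow (by positivity) (by rw [← pow_add]; congr 1; omega)
  have hηfix : σ (ζ ^ p ^ (n - s)) = ζ ^ p ^ (n - s) := by
    obtain ⟨i, -, hi⟩ := hζs'.eq_pow_of_pow_eq_one hη.pow_eq_one
    rw [← hi, map_pow, AlgEquiv.commutes]
  have ht1 : t ≡ 1 [MOD p ^ s] := by
    have h2 : ζ ^ (t * p ^ (n - s)) = ζ ^ (1 * p ^ (n - s)) := by
      rw [one_mul, ← hηfix, map_pow, hσ1, ← pow_mul]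
    have h4 : t * p ^ (n - s) ≡ 1 * p ^ (n - s) [MOD p ^ s * p ^ (n - s)] := by
      have h3 := hpowinj _ _ h2
      rwa [← pow_add, show s + (n - s) = n by omega]
    exact Nat.ModEq.mul_right_cancel' (by positivity) h4
  -- order conditions
  have hunit : ∀ j : ℕ, ((χ σ) ^ j = 1 ↔ t ^ j ≡ 1 [MOD p ^ n]) := by
    intro j
    rw [Units.ext_iff, hcastj j]
    rw [show ((1 : (ZMod (p ^ n))ˣ) : ZMod (p ^ n)) = ((1 : ℕ) : ZMod (p ^ n)) by simp]
    exact ZMod.natCast_eq_natCast_iff _ _ _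
  have htl : t ^ p ^ l ≡ 1 [MOD p ^ n] :=
    (hunit (p ^ l)).mp (by rw [← hordw]; exact pow_orderOf_eq_one _)
  have htmin : ∀ j < l, ¬ t ^ p ^ j ≡ 1 [MOD p ^ n] := by
    intro j hj h
    have h1 := orderOf_dvd_of_pow_eq_one ((hunit (p ^ j)).mpr h)
    rw [hordw] at h1
    exact absurd ((Nat.pow_dvd_pow_iff_le_right hp1).mp h1) (by omega)
  obtain ⟨S', hSeq, hS'p, hsln⟩ := NTlemma hp hodd hs hsn ht1 htl htmin
  set Snat := ∑ j ∈ Finset.range (p ^ l), t ^ j with hSnat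
  -- norm as product over powers of σ
  have hprod : ∀ x : L,
      algebraMap F L (Algebra.norm F x) = ∏ j ∈ Finset.range (p ^ l), (σ ^ j) x := by
    intro x
    rw [Algebra.norm_eq_prod_automorphisms]
    have hbij : Function.Bijective (fun j : Fin (p ^ l) => σ ^ (j : ℕ)) := by
      rw [Fintype.bijective_iff_injective_and_card]
      constructor
      · intro i j h
        have h2 : (i : ℕ) ≡ (j : ℕ) [MOD p ^ l] := by
          have h2' := pow_eq_pow_iff_modEq.mp h
          rwa [hord] at h2'
        have h3 : (i : ℕ) % p ^ l = (j : ℕ) % p ^ l := h2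
        rw [Nat.mod_eq_of_lt i.isLt, Nat.mod_eq_of_lt j.isLt] at h3
        exact Fin.ext h3
      · simp [hcard]
    rw [← Fin.prod_univ_eq_prod_range (fun j => (σ ^ j) x) (p ^ l)]
    exact (Fintype.prod_bijective _ hbij _ _ (fun j => rfl)).symm
  have hnormζ : ∀ k : ℕ, algebraMap F L (Algebra.norm F (ζ ^ k)) = ζ ^ (Snat * k) := by
    intro k
    rw [hprod]
    have h1 : ∀ j ∈ Finset.range (p ^ l), (σ ^ j) (ζ ^ k) = ζ ^ (t ^ j * k) := by
      intro j _
      rw [map_pow, hσj j, ← pow_mul]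
    rw [Finset.prod_congr rfl h1, Finset.prod_pow_eq_pow_sum, ← Finset.sum_mul]
  -- ζs⁻¹ as a power of ζ
  obtain ⟨b, hblt, hb⟩ := hη.eq_pow_of_pow_eq_one hζs'.pow_eq_one
  have hbinv : (ι ζs)⁻¹ = ζ ^ (p ^ (n - s) * (p ^ s - b)) := by
    apply inv_eq_of_mul_eq_one_right
    rw [← hb, ← pow_mul, ← pow_add,
      show p ^ (n - s) * b + p ^ (n - s) * (p ^ s - b) = p ^ (n - s) * p ^ s by
        rw [← Nat.mul_add]; congr 1; omega,
      ← pow_add, show n - s + s = n by omega]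
    exact hζ.pow_eq_one
  -- solve for k
  set m := p ^ (n - l) with hm
  haveI : NeZero m := ⟨by positivity⟩
  set c := p ^ (n - s - l) * (p ^ s - b) with hc
  have hcop : Nat.Coprime S' m :=
    Nat.Coprime.pow_right _ ((hp.coprime_iff_not_dvd.mpr hS'p).symm)
  obtain ⟨k, hkc⟩ : ∃ k : ℕ, S' * k ≡ c [MOD m] := by
    refine ⟨((c : ZMod m) * (S' : ZMod m)⁻¹).val, (ZMod.natCast_eq_natCast_iff _ _ _).mp ?_⟩
    push_cast
    rw [ZMod.natCast_val, ZMod.cast_id]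
    rw [show (S' : ZMod m) * ((c : ZMod m) * (S' : ZMod m)⁻¹)
          = (c : ZMod m) * ((S' : ZMod m) * (S' : ZMod m)⁻¹) by ring]
    rw [ZMod.coe_mul_inv_eq_one S' hcop, mul_one]
  have hkS : Snat * k ≡ p ^ (n - s) * (p ^ s - b) [MOD p ^ n] := by
    have h1 : p ^ l * (S' * k) ≡ p ^ l * c [MOD p ^ l * m] := hkc.mul_left' _
    have h2 : p ^ l * m = p ^ n := by rw [hm, ← pow_add]; congr 1; omega
    have h3 : p ^ l * c = p ^ (n - s) * (p ^ s - b) := by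
      rw [hc, ← mul_assoc, ← pow_add, show l + (n - s - l) = n - s by omega]
    rw [h2, h3] at h1
    calc Snat * k = p ^ l * (S' * k) := by rw [hSeq]; ring
    _ ≡ p ^ (n - s) * (p ^ s - b) [MOD p ^ n] := h1
  have hζ0 : ζ ≠ 0 := hζ.ne_zero (by positivity)
  refine ⟨ζ ^ k, pow_ne_zero _ hζ0, ?_⟩
  rw [← hprod, hnormζ k, hcongr _ _ hkS, ← hbinv]
  exact inv_mul_cancel₀ (hζs'.ne_zero (by positivity))
/-- Let `F` be a field of characteristic 0 and `n ≥ s ≥ 1` with `p` odd, such that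
`ζ_{p^s} ∈ F` and `L = F(ζ_{p^n})` has degree `p^l` over `F`. Then the cyclic algebra
`(L/F, σ, ζ_{p^s})`, where `σ` generates `Gal(L/F)` — i.e. any `F`-algebra
`A = ⊕_{j < p^l} L uʲ` with `u x = σ(x) u` and `u^{p^l} = ζ_{p^s}` — is isomorphic as an
`F`-algebra to the matrix algebra `M_{p^l}(F)`. -/
theorem stmt_5 (p n s l : ℕ) (hp : p.Prime) (hodd : Odd p) (hs : 1 ≤ s) (hsn : s ≤ n)
    (F L : Type) [Field F] [Field L] [Algebra F L] [CharZero F] [IsGalois F L]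
    (ζs : F) (hζs : IsPrimitiveRoot ζs (p ^ s))
    (ζ : L) (hζ : IsPrimitiveRoot ζ (p ^ n))
    (hgen : IntermediateField.adjoin F {ζ} = ⊤)
    (hdeg : Module.finrank F L = p ^ l)
    (σ : L ≃ₐ[F] L) (hσ : ∀ τ : L ≃ₐ[F] L, τ ∈ Subgroup.zpowers σ)
    (A : Type) [Ring A] [Algebra F A]
    (f : L →ₐ[F] A) (hf : Function.Injective f) (u : A)
    (hcomm : ∀ x : L, u * f x = f (σ x) * u)
    (hu : u ^ (p ^ l) = algebraMap F A ζs)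
    (hgenA : Algebra.adjoin F (Set.range f ∪ {u}) = ⊤)
    (hdimA : Module.finrank F A = p ^ (2 * l)) :
    Nonempty (A ≃ₐ[F] Matrix (Fin (p ^ l)) (Fin (p ^ l)) F) := by
  classical
  have hp1 := hp.one_lt
  have hNpos : 0 < p ^ l := by positivity
  haveI : FiniteDimensional F L :=
    FiniteDimensional.of_finrank_pos (by rw [hdeg]; positivity)
  haveI : FiniteDimensional F A :=
    FiniteDimensional.of_finrank_pos (by rw [hdimA]; positivity)
  have hord : orderOf σ = p ^ l :=
    (orderOf_eq_card_of_forall_mem_zpowers hσ).trans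
      ((IsGalois.card_aut_eq_finrank F L).trans hdeg)
  obtain ⟨x, hx0, hxprod⟩ := partA p n s l hp hodd hs hsn F L ζs hζs ζ hζ hgen hdeg σ hσ
  set v := f x * u with hv
  -- commutation of powers of u and v with f-images
  have hucomm : ∀ (j : ℕ) (y : L), u ^ j * f y = f ((σ ^ j) y) * u ^ j := by
    intro j
    induction j with
    | zero => intro y; simp
    | succ j ih =>
      intro y
      rw [pow_succ', mul_assoc, ih y, ← mul_assoc, hcomm, mul_assoc, ← pow_succ',
        ← AlgEquiv.mul_apply, ← pow_succ']
  have hvcomm : ∀ y : L, v * f y = f (σ y) * v := by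
    intro y
    calc v * f y = f x * (u * f y) := by rw [hv, mul_assoc]
    _ = f x * (f (σ y) * u) := by rw [hcomm]
    _ = f x * f (σ y) * u := by rw [mul_assoc]
    _ = f (σ y) * f x * u := by rw [← map_mul, mul_comm x, map_mul]
    _ = f (σ y) * v := by rw [hv, mul_assoc]
  have hvj : ∀ (j : ℕ) (y : L), v ^ j * f y = f ((σ ^ j) y) * v ^ j := by
    intro j
    induction j with
    | zero => intro y; simp
    | succ j ih =>
      intro y
      rw [pow_succ', mul_assoc, ih y, ← mul_assoc, hvcomm, mul_assoc, ← pow_succ',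
        ← AlgEquiv.mul_apply, ← pow_succ']
  have hvpow : ∀ j : ℕ, v ^ j = f (∏ i ∈ Finset.range j, (σ ^ i) x) * u ^ j := by
    intro j
    induction j with
    | zero => simp
    | succ j ih =>
      rw [pow_succ, ih, Finset.prod_range_succ, map_mul]
      calc f (∏ i ∈ Finset.range j, (σ ^ i) x) * u ^ j * (f x * u)
          = f (∏ i ∈ Finset.range j, (σ ^ i) x) * (u ^ j * f x) * u := by
            rw [mul_assoc, mul_assoc, mul_assoc]
      _ = f (∏ i ∈ Finset.range j, (σ ^ i) x) * (f ((σ ^ j) x) * u ^ j) * u := by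
            rw [hucomm]
      _ = f (∏ i ∈ Finset.range j, (σ ^ i) x) * f ((σ ^ j) x) * u ^ (j + 1) := by
            rw [pow_succ]; simp only [mul_assoc]
  have hv1 : v ^ p ^ l = 1 := by
    rw [hvpow, hu, show algebraMap F A ζs = f (algebraMap F L ζs) from (f.commutes ζs).symm,
      ← map_mul, hxprod, map_one]
  have hvmod : ∀ j : ℕ, v ^ j = v ^ (j % p ^ l) := by
    intro j
    conv_lhs => rw [← Nat.div_add_mod j (p ^ l)]
    rw [pow_add, pow_mul, hv1, one_pow, one_mul]
  have hσmod : ∀ j : ℕ, (σ ^ (j % p ^ l) : L ≃ₐ[F] L) = σ ^ j := by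
    intro j
    rw [← hord]
    exact pow_mod_orderOf σ j
  -- the spanning family
  set bL : Module.Basis (Fin (p ^ l)) F L := Module.finBasisOfFinrankEq F L hdeg with hbL
  set g : Fin (p ^ l) × Fin (p ^ l) → A :=
    fun km => f (bL km.1) * v ^ (km.2 : ℕ) with hg
  set S := Submodule.span F (Set.range g) with hS
  have hmem : ∀ (y : L) (j : ℕ), f y * v ^ j ∈ S := by
    intro y j
    rw [hvmod j]
    have hj : j % p ^ l < p ^ l := Nat.mod_lt _ hNpos
    have hy : f y * v ^ (j % p ^ l)
        = ∑ k : Fin (p ^ l), bL.repr y k • (f (bL k) * v ^ (j % p ^ l)) := by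
      conv_lhs => rw [← bL.sum_repr y]
      rw [map_sum, Finset.sum_mul]
      refine Finset.sum_congr rfl fun k _ => ?_
      rw [map_smul, smul_mul_assoc]
    rw [hy]
    exact Submodule.sum_mem _ fun k _ => Submodule.smul_mem _ _
      (Submodule.subset_span ⟨(k, ⟨j % p ^ l, hj⟩), rfl⟩)
  have hgmul : ∀ (k m : Fin (p ^ l)) (i j : ℕ),
      (f (bL k) * v ^ i) * (f (bL m) * v ^ j)
        = f (bL k * (σ ^ i) (bL m)) * v ^ (i + j) := by
    intro k m i j
    rw [mul_assoc, ← mul_assoc (v ^ i), hvj, mul_assoc, ← pow_add, ← mul_assoc, ← map_mul]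
  have hSmul : ∀ a ∈ S, ∀ b ∈ S, a * b ∈ S := by
    intro a ha b hb
    have h2 : S * S ≤ S := by
      rw [hS, Submodule.span_mul_span, Submodule.span_le]
      rintro z ⟨a', ha', b', hb', rfl⟩
      obtain ⟨⟨k, i⟩, rfl⟩ := ha'
      obtain ⟨⟨m, j⟩, rfl⟩ := hb'
      show g (k, i) * g (m, j) ∈ S
      rw [hg]
      dsimp only
      rw [hgmul]
      exact hmem _ _
    exact h2 (Submodule.mul_mem_mul ha hb)
  have hone : (1 : A) ∈ S := by simpa using hmem 1 0
  have htop : ⊤ ≤ S := by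
    intro a _
    have h2 : Algebra.adjoin F (Set.range ⇑f ∪ {u})
        ≤ S.toSubalgebra hone (fun a b ha hb => hSmul a ha b hb) := by
      apply Algebra.adjoin_le
      rintro z hzmem
      rcases hzmem with ⟨y, rfl⟩ | hzu
      · show f y ∈ S
        simpa using hmem y 0
      · rw [Set.mem_singleton_iff] at hzu
        show z ∈ S
        have hz : z = f x⁻¹ * v ^ 1 := by
          rw [hzu, pow_one, hv, ← mul_assoc, ← map_mul, inv_mul_cancel₀ hx0, map_one, one_mul]
        rw [hz]
        exact hmem _ _
    have h3 : a ∈ S.toSubalgebra hone (fun a b ha hb => hSmul a ha b hb) :=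
      h2 (by rw [hgenA]; trivial)
    exact h3
  have hcardA : Fintype.card (Fin (p ^ l) × Fin (p ^ l)) = Module.finrank F A := by
    simp [hdimA, two_mul, pow_add]
  set bA : Module.Basis (Fin (p ^ l) × Fin (p ^ l)) F A :=
    basisOfTopLeSpanOfCardEqFinrank g htop hcardA with hbAdef
  have hbA : ⇑bA = g := coe_basisOfTopLeSpanOfCardEqFinrank _ _ _
  -- the linear map to endomorphisms
  set e' : Fin (p ^ l) × Fin (p ^ l) → Module.End F L :=
    fun km => LinearMap.mulLeft F (bL km.1) ∘ₗ (σ ^ (km.2 : ℕ)).toLinearMap with he'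
  set Φ : A →ₗ[F] Module.End F L := bA.constr F e' with hΦdef
  have hΦg : ∀ i, Φ (g i) = e' i := by
    intro i
    rw [show g i = bA i from (congrFun hbA i).symm]
    exact bA.constr_basis F e' i
  have hΦfv : ∀ (y : L) (j : ℕ),
      Φ (f y * v ^ j) = LinearMap.mulLeft F y ∘ₗ (σ ^ j).toLinearMap := by
    have hsmall : ∀ (y : L) (j : Fin (p ^ l)),
        Φ (f y * v ^ (j : ℕ)) = LinearMap.mulLeft F y ∘ₗ (σ ^ (j : ℕ)).toLinearMap := by
      intro y j
      have hy : f y * v ^ (j : ℕ) = ∑ k : Fin (p ^ l), bL.repr y k • g (k, j) := by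
        conv_lhs => rw [← bL.sum_repr y]
        rw [map_sum, Finset.sum_mul]
        refine Finset.sum_congr rfl fun k _ => ?_
        rw [map_smul, smul_mul_assoc]
      rw [hy, map_sum]
      have hterm : ∀ k : Fin (p ^ l), Φ (bL.repr y k • g (k, j)) = bL.repr y k • e' (k, j) := by
        intro k
        rw [map_smul, hΦg]
      rw [Finset.sum_congr rfl fun k _ => hterm k]
      apply LinearMap.ext
      intro z
      rw [LinearMap.sum_apply]
      simp only [he', LinearMap.smul_apply, LinearMap.coe_comp, Function.comp_apply,
        LinearMap.mulLeft_apply, AlgEquiv.toLinearMap_apply]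
      calc ∑ k : Fin (p ^ l), bL.repr y k • (bL k * (σ ^ (j : ℕ)) z)
          = ∑ k : Fin (p ^ l), (bL.repr y k • bL k) * (σ ^ (j : ℕ)) z := by
            refine Finset.sum_congr rfl fun k _ => ?_
            rw [smul_mul_assoc]
      _ = (∑ k : Fin (p ^ l), bL.repr y k • bL k) * (σ ^ (j : ℕ)) z := by
            rw [Finset.sum_mul]
      _ = y * (σ ^ (j : ℕ)) z := by rw [bL.sum_repr y]
    intro y j
    have hj : j % p ^ l < p ^ l := Nat.mod_lt _ hNpos
    have h1 := hsmall y ⟨j % p ^ l, hj⟩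
    rw [hvmod j]
    rw [show ((⟨j % p ^ l, hj⟩ : Fin (p ^ l)) : ℕ) = j % p ^ l from rfl] at h1
    rw [h1, hσmod j]
  have hΦmul : ∀ a b : A, Φ (a * b) = Φ a * Φ b := by
    have hbil : (LinearMap.mul F A).compr₂ Φ
        = (LinearMap.mul F (Module.End F L)).compl₁₂ Φ Φ := by
      apply LinearMap.ext_basis bA bA
      rintro ⟨k, i⟩ ⟨m, j⟩
      simp only [LinearMap.compr₂_apply, LinearMap.mul_apply', LinearMap.compl₁₂_apply]
      rw [show bA (k, i) = g (k, i) from congrFun hbA _,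
        show bA (m, j) = g (m, j) from congrFun hbA _, hΦg, hΦg]
      have hgg : g (k, i) * g (m, j)
          = f (bL k * (σ ^ (i : ℕ)) (bL m)) * v ^ ((i : ℕ) + (j : ℕ)) := by
        rw [hg]; dsimp only; rw [hgmul]
      rw [hgg, hΦfv]
      apply LinearMap.ext
      intro z
      simp only [he', LinearMap.coe_comp, Function.comp_apply, LinearMap.mulLeft_apply,
        AlgEquiv.toLinearMap_apply, Module.End.mul_apply]
      rw [pow_add, AlgEquiv.mul_apply, map_mul]
      ring
    intro a b
    have h1 := DFunLike.congr_fun (DFunLike.congr_fun hbil a) b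
    simpa only [LinearMap.compr₂_apply, LinearMap.mul_apply', LinearMap.compl₁₂_apply] using h1
  have hΦ1 : Φ 1 = 1 := by
    have h1 : (1 : A) = f 1 * v ^ 0 := by simp
    rw [h1, hΦfv]
    apply LinearMap.ext
    intro z
    simp
  set Φalg : A →ₐ[F] Module.End F L := AlgHom.ofLinearMap Φ hΦ1 hΦmul with hΦalg
  -- linear independence of the image family
  set φ : Fin (p ^ l) → (L →* L) :=
    fun j => ((σ ^ (j : ℕ)).toAlgHom.toRingHom : L →+* L).toMonoidHom with hφ
  have hφinj : Function.Injective φ := by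
    intro i j h
    have hs' : (σ ^ (i : ℕ) : L ≃ₐ[F] L) = σ ^ (j : ℕ) :=
      AlgEquiv.ext fun z => DFunLike.congr_fun h z
    have h2 := pow_eq_pow_iff_modEq.mp hs'
    rw [hord] at h2
    have h3 : (i : ℕ) % p ^ l = (j : ℕ) % p ^ l := h2
    rw [Nat.mod_eq_of_lt i.isLt, Nat.mod_eq_of_lt j.isLt] at h3
    exact Fin.ext h3
  have hindep : LinearIndependent F e' := by
    rw [Fintype.linearIndependent_iff]
    intro c hc
    have hz : ∀ z : L,
        ∑ km : Fin (p ^ l) × Fin (p ^ l), c km • (bL km.1 * (σ ^ (km.2 : ℕ)) z) = 0 := by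
      intro z
      have h1 := LinearMap.congr_fun hc z
      simpa only [LinearMap.coe_sum, Finset.sum_apply, LinearMap.smul_apply, he',
        LinearMap.coe_comp, Function.comp_apply, LinearMap.mulLeft_apply,
        AlgEquiv.toLinearMap_apply, LinearMap.zero_apply] using h1
    set w : Fin (p ^ l) → L := fun j => ∑ k, c (k, j) • bL k with hwdef
    have hwz : (∑ j : Fin (p ^ l), w j • ⇑(φ j)) = 0 := by
      funext z
      have h1 := hz z
      rw [Fintype.sum_prod_type] at h1
      rw [Finset.sum_comm] at h1
      have h2 : ∀ j : Fin (p ^ l),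
          ∑ k : Fin (p ^ l), c (k, j) • (bL k * (σ ^ (j : ℕ)) z)
            = w j * (σ ^ (j : ℕ)) z := by
        intro j
        rw [hwdef]
        dsimp only
        rw [Finset.sum_mul]
        refine Finset.sum_congr rfl fun k _ => ?_
        rw [smul_mul_assoc]
      rw [Finset.sum_congr rfl fun j _ => h2 j] at h1
      show (∑ j : Fin (p ^ l), w j • ⇑(φ j)) z = (0 : L → L) z
      rw [Finset.sum_apply]
      simp only [Pi.smul_apply, smul_eq_mul, Pi.zero_apply]; exact h1
    have hLI : LinearIndependent L (fun j : Fin (p ^ l) => ⇑(φ j)) :=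
      (linearIndependent_monoidHom L L).comp φ hφinj
    have hw0 := Fintype.linearIndependent_iff.mp hLI w hwz
    rintro ⟨k, j⟩
    have h3 := Fintype.linearIndependent_iff.mp bL.linearIndependent
      (fun k => c (k, j)) (by show (∑ k, c (k, j) • bL k) = 0; exact hw0 j)
    exact h3 k
  have hΦinj : Function.Injective Φ := by
    have h0 : ∀ a : A, Φ a = 0 → a = 0 := by
      intro a ha
      have h1 : Φ a = ∑ i, bA.repr a i • e' i := by
        conv_lhs => rw [← bA.sum_repr a]
        rw [map_sum]
        refine Finset.sum_congr rfl fun i _ => ?_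
        rw [map_smul, show bA i = g i from congrFun hbA i, hΦg]
      have h2 := Fintype.linearIndependent_iff.mp hindep
        (fun i => bA.repr a i)
        (by show (∑ i, bA.repr a i • e' i) = 0; rw [← h1, ha])
      calc a = ∑ i, bA.repr a i • bA i := (bA.sum_repr a).symm
      _ = 0 := Finset.sum_eq_zero fun i _ => by
          have h3 : (bA.repr a) i = 0 := h2 i
          rw [h3, zero_smul]
    intro a b hab
    have := h0 (a - b) (by rw [map_sub, hab, sub_self])
    exact sub_eq_zero.mp this
  have hrank : Module.finrank F A = Module.finrank F (Module.End F L) := by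
    have hEnd : Module.finrank F (Module.End F L) = Module.finrank F L * Module.finrank F L :=
      Module.finrank_linearMap F F L L
    rw [hEnd, hdeg, hdimA, two_mul, pow_add]
  have hΦsurj : Function.Surjective Φ :=
    (LinearMap.injective_iff_surjective_of_finrank_eq_finrank hrank).mp hΦinj
  have hbij : Function.Bijective Φalg := ⟨hΦinj, hΦsurj⟩
  exact ⟨(AlgEquiv.ofBijective Φalg hbij).trans (algEquivMatrix bL)⟩
end

section
/- Let G be a finite metabelian group, K a maximal abelian normal subgroup of G with G/K abelian, and L ≤ K a subgroup such that K/L is cyclic and the G-core of L is trivial. Then the centralizer in G of the quotient K/L equals K; that is, {g ∈ G : [g,k] ∈ L for all k ∈ K} = K. -/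
/-!
Write `[g, k] = g⁻¹ k⁻¹ g k`. If `[g, k] ∈ L` for all `k ∈ K`, then these commutators already lie
in the normal core of `L`: conjugating by `x` gives `[g c, k']` with `k' = x k x⁻¹ ∈ K` and
`c = [g, x⁻¹] ∈ G' ≤ K`, and since `K` is abelian and contains `[g, k']`, the factor `c` drops out.
The core being trivial, `g` centralizes `K`, so `⟨K, g⟩` is abelian; it contains `G'`, hence is
normal, and maximality of `K` forces `g ∈ K`.
-/

open Subgroup
open scoped commutatorElement

section
variable {G : Type*} [Group G]

theorem inv_mul_inv_mul_mul_eq_commutatorElement (a b : G) :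
    a⁻¹ * b⁻¹ * a * b = ⁅a⁻¹, b⁻¹⁆ := by
  rw [commutatorElement_def, inv_inv, inv_inv]

theorem inv_mul_inv_mul_mul_mem_commutator (a b : G) : a⁻¹ * b⁻¹ * a * b ∈ commutator G := by
  rw [inv_mul_inv_mul_mul_eq_commutatorElement, _root_.commutator_def]
  exact commutator_mem_commutator (mem_top a⁻¹) (mem_top b⁻¹)

theorem inv_mul_inv_mul_mul_eq_one_iff {g k : G} : g⁻¹ * k⁻¹ * g * k = 1 ↔ g * k = k * g := by
  rw [inv_mul_inv_mul_mul_eq_commutatorElement, commutatorElement_eq_one_iff_commute,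
    Commute.inv_inv_iff, Commute, SemiconjBy]

theorem inv_mul_inv_mul_mul_mul_right {g c k : G} (hck : Commute c k)
    (hcd : Commute c (g⁻¹ * k⁻¹ * g * k)) :
    (g * c)⁻¹ * k⁻¹ * (g * c) * k = g⁻¹ * k⁻¹ * g * k :=
  calc (g * c)⁻¹ * k⁻¹ * (g * c) * k = c⁻¹ * (g⁻¹ * k⁻¹ * g) * (c * k) := by group
    _ = c⁻¹ * (c * (g⁻¹ * k⁻¹ * g * k)) := by rw [hck.eq, hcd.eq]; group
    _ = g⁻¹ * k⁻¹ * g * k := inv_mul_cancel_left c _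

theorem conj_inv_mul_inv_mul_mul_eq {K : Subgroup G}
    (hK : ∀ a b : G, a ∈ K → b ∈ K → a * b = b * a) (hGK : commutator G ≤ K)
    (g x : G) {k : G} (hk : k ∈ K) :
    x * (g⁻¹ * k⁻¹ * g * k) * x⁻¹ = g⁻¹ * (x * k * x⁻¹)⁻¹ * g * (x * k * x⁻¹) := by
  have hk' : x * k * x⁻¹ ∈ K := (Normal.of_commutator_le _ hGK).conj_mem k hk x
  have hc : g⁻¹ * x⁻¹⁻¹ * g * x⁻¹ ∈ K := hGK (inv_mul_inv_mul_mul_mem_commutator g x⁻¹)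
  have hd := hGK (inv_mul_inv_mul_mul_mem_commutator g (x * k * x⁻¹))
  calc x * (g⁻¹ * k⁻¹ * g * k) * x⁻¹
      = (g * (g⁻¹ * x⁻¹⁻¹ * g * x⁻¹))⁻¹ * (x * k * x⁻¹)⁻¹ *
          (g * (g⁻¹ * x⁻¹⁻¹ * g * x⁻¹)) * (x * k * x⁻¹) := by group
    _ = g⁻¹ * (x * k * x⁻¹)⁻¹ * g * (x * k * x⁻¹) :=
      inv_mul_inv_mul_mul_mul_right (hK _ _ hc hk') (hK _ _ hc hd)

theorem mem_of_forall_mul_comm {K : Subgroup G}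
    (hK : ∀ a b : G, a ∈ K → b ∈ K → a * b = b * a) (hGK : commutator G ≤ K)
    (hmax : ∀ K' : Subgroup G, K'.Normal →
      (∀ a b : G, a ∈ K' → b ∈ K' → a * b = b * a) → K ≤ K' → K' = K)
    {g : G} (hg : ∀ k ∈ K, g * k = k * g) : g ∈ K := by
  have hcomm : ∀ x ∈ insert g (K : Set G), ∀ y ∈ insert g (K : Set G), x * y = y * x := by
    rintro x (rfl | hx) y (rfl | hy)
    exacts [rfl, hg y hy, (hg x hx).symm, hK x y hx hy]
  have hKH : K ≤ closure (insert g K) := fun x hx => subset_closure (Set.mem_insert_of_mem g hx)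
  have := isMulCommutative_closure hcomm
  rw [← hmax _ (Normal.of_commutator_le _ (hGK.trans hKH))
    (fun _ _ ha hb => setLike_mul_comm ha hb) hKH]
  exact subset_closure (Set.mem_insert g K)

end

theorem stmt_7_general (G : Type) [Group G]
    (K : Subgroup G)
    (hKab : ∀ a b : G, a ∈ K → b ∈ K → a * b = b * a)
    (hGK : commutator G ≤ K)
    (hmax : ∀ K' : Subgroup G, K'.Normal →
      (∀ a b : G, a ∈ K' → b ∈ K' → a * b = b * a) → K ≤ K' → K' = K)
    (L : Subgroup G)
    (hcore : ∀ N : Subgroup G, N.Normal → N ≤ L → N = ⊥) :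
    ∀ g : G, (∀ k ∈ K, g⁻¹ * k⁻¹ * g * k ∈ L) ↔ g ∈ K := by
  intro g
  refine ⟨fun hg => mem_of_forall_mul_comm hKab hGK hmax fun k hk => ?_, fun hg k hk => ?_⟩
  · have hcoreL : L.normalCore = ⊥ := hcore _ L.normalCore_normal L.normalCore_le
    have hgk : g⁻¹ * k⁻¹ * g * k ∈ L.normalCore := fun x => by
      rw [conj_inv_mul_inv_mul_mul_eq hKab hGK g x hk]
      exact hg _ ((Normal.of_commutator_le _ hGK).conj_mem k hk x)
    rwa [hcoreL, mem_bot, inv_mul_inv_mul_mul_eq_one_iff] at hgk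
  · rw [inv_mul_inv_mul_mul_eq_one_iff.mpr (hKab g k hg hk)]
    exact L.one_mem

/-- Let `G` be a finite metabelian group, `K` a maximal abelian normal subgroup of `G`
containing the derived subgroup (so `G/K` is abelian), and `L ≤ K` a subgroup such that
`K/L` is cyclic and the `G`-core of `L` is trivial. Then `C_G(K/L) = K`; that is,
`{g ∈ G : [g,k] ∈ L for all k ∈ K} = K`. -/
theorem stmt_7 (G : Type) [Group G] [Finite G]
    (hmeta : ∀ a b : commutator G, a * b = b * a)
    (K : Subgroup G) (hKn : K.Normal)
    (hKab : ∀ a b : G, a ∈ K → b ∈ K → a * b = b * a)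
    (hGK : commutator G ≤ K)
    (hmax : ∀ K' : Subgroup G, K'.Normal →
      (∀ a b : G, a ∈ K' → b ∈ K' → a * b = b * a) → K ≤ K' → K' = K)
    (L : Subgroup G) (hLK : L ≤ K)
    (hcyc : ∃ k ∈ K, ∀ x ∈ K, ∃ m : ℤ, x * (k ^ m)⁻¹ ∈ L)
    (hcore : ∀ N : Subgroup G, N.Normal → N ≤ L → N = ⊥) :
    ∀ g : G, (∀ k ∈ K, g⁻¹ * k⁻¹ * g * k ∈ L) ↔ g ∈ K :=
  stmt_7_general G K hKab hGK hmax L hcore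
end

section
/- Let G be a finite metabelian group, K a maximal abelian normal subgroup of G with G/K abelian, and L ≤ K a subgroup such that K/L is cyclic and the G-core of L is trivial. Then the order of K/L equals the exponent of K. -/
/-!
Since `K` is abelian, `L` is normal in `K` and `K/L` is a cyclic group, so its order is its
exponent, which divides `exp(K)`. Conversely every `x ∈ K` satisfies `x ^ |K : L| ∈ L`; as `K` is normal, the same holds
for all conjugates of `x`, so `x ^ |K : L|` lies in the `G`-core of `L`, which is trivial.
-/

namespace Subgroup

variable {G : Type*} [Group G] {K L : Subgroup G}

lemma isCyclic_quotient_subgroupOf [(L.subgroupOf K).Normal]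
    (hcyc : ∃ k ∈ K, ∀ x ∈ K, ∃ m : ℤ, x * (k ^ m)⁻¹ ∈ L) :
    IsCyclic (K ⧸ L.subgroupOf K) := by
  obtain ⟨k, hk, hgen⟩ := hcyc
  refine ⟨⟨QuotientGroup.mk ⟨k, hk⟩, fun y ↦ ?_⟩⟩
  induction y using QuotientGroup.induction_on with
  | H x =>
    obtain ⟨m, hm⟩ := hgen x x.2
    refine ⟨m, ?_⟩
    dsimp only
    rw [← QuotientGroup.mk_zpow, eq_comm, QuotientGroup.eq_iff_div_mem, mem_subgroupOf]
    simpa [div_eq_mul_inv] using hm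

lemma relIndex_dvd_exponent_of_isCyclic [(L.subgroupOf K).Normal]
    [IsCyclic (K ⧸ L.subgroupOf K)] : L.relIndex K ∣ Monoid.exponent K := by
  rw [relIndex, index, ← IsCyclic.exponent_eq_card]
  exact MonoidHom.exponent_dvd (QuotientGroup.mk'_surjective _)

lemma pow_relIndex_mem_normalCore [K.Normal] [IsMulCommutative K] {x : G} (hx : x ∈ K) :
    x ^ L.relIndex K ∈ L.normalCore := fun g ↦ by
  simpa [mem_subgroupOf, relIndex] using
    (L.subgroupOf K).pow_index_mem ⟨g * x * g⁻¹, Normal.conj_mem ‹_› x hx g⟩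

lemma exponent_dvd_relIndex_of_normalCore_eq_bot [K.Normal] [IsMulCommutative K]
    (hcore : L.normalCore = ⊥) : Monoid.exponent K ∣ L.relIndex K := by
  refine Monoid.exponent_dvd_of_forall_pow_eq_one fun x ↦ Subtype.ext ?_
  simpa [hcore] using pow_relIndex_mem_normalCore (L := L) x.2

end Subgroup

theorem stmt_8_general (G : Type) [Group G]
    (K : Subgroup G) (hKn : K.Normal)
    (hKab : ∀ a b : G, a ∈ K → b ∈ K → a * b = b * a)
    (L : Subgroup G)
    (hcyc : ∃ k ∈ K, ∀ x ∈ K, ∃ m : ℤ, x * (k ^ m)⁻¹ ∈ L)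
    (hcore : ∀ N : Subgroup G, N.Normal → N ≤ L → N = ⊥) :
    L.relIndex K = Monoid.exponent K := by
  have : IsMulCommutative K := IsMulCommutative.of_setLike_mul_comm fun a ha b hb ↦ hKab a b ha hb
  have := Subgroup.isCyclic_quotient_subgroupOf hcyc
  exact Nat.dvd_antisymm Subgroup.relIndex_dvd_exponent_of_isCyclic
    (Subgroup.exponent_dvd_relIndex_of_normalCore_eq_bot
      (hcore _ L.normalCore_normal L.normalCore_le))

/-- Let `G` be a finite metabelian group, `K` a maximal abelian normal subgroup of `G`
containing the derived subgroup (so `G/K` is abelian), and `L ≤ K` a subgroup such that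
`K/L` is cyclic and the `G`-core of `L` is trivial. Then the order of `K/L`
(the relative index of `L` in `K`) equals the exponent of `K`. -/
theorem stmt_8 (G : Type) [Group G] [Finite G]
    (hmeta : ∀ a b : commutator G, a * b = b * a)
    (K : Subgroup G) (hKn : K.Normal)
    (hKab : ∀ a b : G, a ∈ K → b ∈ K → a * b = b * a)
    (hGK : commutator G ≤ K)
    (hmax : ∀ K' : Subgroup G, K'.Normal →
      (∀ a b : G, a ∈ K' → b ∈ K' → a * b = b * a) → K ≤ K' → K' = K)
    (L : Subgroup G) (hLK : L ≤ K)
    (hcyc : ∃ k ∈ K, ∀ x ∈ K, ∃ m : ℤ, x * (k ^ m)⁻¹ ∈ L)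
    (hcore : ∀ N : Subgroup G, N.Normal → N ≤ L → N = ⊥) :
    L.relIndex K = Monoid.exponent K :=
  stmt_8_general G K hKn hKab L hcyc hcore
end

section
/- Let G be a finite metabelian group with a maximal abelian normal subgroup K containing G', and let F = algebraically closed field of characteristic 0. Then every faithful irreducible F-representation of G is induced from a one-dimensional representation of K. -/
/-!
A common eigenvector `w` of the abelian subgroup `K` spans a `K`-stable line on which `K` acts by a
character `λ`. Each translate `ρ g w` is again a `K`-eigenvector, with the conjugate character
`λ^g = λ ∘ (g⁻¹ · g)`, and these translates span `V` because `ρ` is irreducible. If `λ^h = λ`,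
then for `k ∈ K` the commutator `⁅h, k⁆ ∈ G' ≤ K` satisfies `g⁻¹ ⁅h, k⁆ g = ⁅h, g⁻¹ k g⁆`
(as `K` is abelian and contains `G'`), so `λ^g ⁅h, k⁆ = 1` for all `g`; thus `ρ ⁅h, k⁆ = 1`,
and by faithfulness `h` centralizes `K`, whence `h ∈ K` by maximality. So cosets of `K` give
pairwise distinct characters `λ^g`, and the vectors `ρ g w`, one per coset, are linearly
independent: they form a basis of `V` indexed by `G ⧸ K`.
-/

open Module

theorem Module.End.exists_forall_apply_eq_smul_of_commute {K V ι : Type*} [Field K]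
    [IsAlgClosed K] [AddCommGroup V] [Module K V] [FiniteDimensional K V] [Nontrivial V]
    [Finite ι] (f : ι → End K V) (hf : ∀ i j, Commute (f i) (f j)) :
    ∃ w ≠ 0, ∃ c : ι → K, ∀ i, f i w = c i • w := by
  classical
  have : Fintype ι := Fintype.ofFinite ι
  suffices ∀ s : Finset ι, ∃ U : Submodule K V, U ≠ ⊥ ∧ (∀ i, ∀ u ∈ U, f i u ∈ U) ∧
      ∀ i ∈ s, ∃ c : K, ∀ u ∈ U, f i u = c • u by
    obtain ⟨U, hU, -, hUc⟩ := this Finset.univ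
    choose c hc using fun i ↦ hUc i (Finset.mem_univ i)
    obtain ⟨w, hwU, hw0⟩ := Submodule.exists_mem_ne_zero_of_ne_bot hU
    exact ⟨w, hw0, c, fun i ↦ hc i w hwU⟩
  intro s
  induction s using Finset.induction_on with
  | empty => exact ⟨⊤, top_ne_bot, fun _ _ _ ↦ Submodule.mem_top, by simp⟩
  | insert j s _ ih =>
    obtain ⟨U, hU, hUinv, hUc⟩ := ih
    have : Nontrivial U := Submodule.nontrivial_iff_ne_bot.mpr hU
    obtain ⟨μ, hμ⟩ := End.exists_eigenvalue ((f j).restrict (hUinv j))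
    obtain ⟨v, hv⟩ := hμ.exists_hasEigenvector
    refine ⟨U ⊓ (f j).eigenspace μ, ?_, fun i u hu ↦ ⟨hUinv i u hu.1, ?_⟩, fun i hi ↦ ?_⟩
    · refine Submodule.ne_bot_iff _ |>.mpr ⟨v, ⟨v.2, ?_⟩, by simpa using hv.2⟩
      exact End.mem_eigenspace_iff.mpr (congrArg Subtype.val hv.apply_eq_smul)
    · have hu₂ : f j u = μ • u := End.mem_eigenspace_iff.mp hu.2
      exact End.mem_eigenspace_iff.mpr <| by
        rw [← End.mul_apply, (hf j i).eq, End.mul_apply, hu₂, map_smul]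
    · rcases Finset.mem_insert.mp hi with rfl | hi
      · exact ⟨μ, fun u hu ↦ End.mem_eigenspace_iff.mp hu.2⟩
      · obtain ⟨c, hc⟩ := hUc i hi
        exact ⟨c, fun u hu ↦ hc u hu.1⟩

theorem Representation.exists_monoidHom_eigenvector_of_commute {K M V : Type*} [Field K]
    [IsAlgClosed K] [Monoid M] [Finite M] [AddCommGroup V] [Module K V] [FiniteDimensional K V]
    [Nontrivial V] (ρ : Representation K M V) (hρ : ∀ a b, Commute (ρ a) (ρ b)) :
    ∃ χ : M →* K, ∃ w ≠ 0, ∀ m, ρ m w = χ m • w := by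
  obtain ⟨w, hw0, c, hc⟩ := End.exists_forall_apply_eq_smul_of_commute ρ hρ
  refine ⟨{ toFun := c, map_one' := ?_, map_mul' := fun a b ↦ ?_ }, w, hw0, hc⟩
  · exact smul_left_injective K hw0 (by simp [← hc])
  · refine smul_left_injective K hw0 ?_
    dsimp only
    rw [← hc, map_mul, End.mul_apply, hc, map_smul, hc, smul_smul, mul_comm]

theorem Module.End.linearIndependent_of_forall_apply_eq_smul {ι κ R M : Type*} [CommRing R]
    [IsDomain R] [AddCommGroup M] [Module R M] [IsTorsionFree R M] (f : ι → End R M)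
    (hf : ∀ i j, Commute (f i) (f j)) {χ : κ → ι → R} (hχ : Function.Injective χ) {v : κ → M}
    (hv0 : ∀ a, v a ≠ 0) (hv : ∀ a i, f i (v a) = χ a i • v a) : LinearIndependent R v :=
  ((independent_iInf_maxGenEigenspace_of_forall_mapsTo f
    fun i j φ ↦ mapsTo_maxGenEigenspace_of_comm (hf j i) φ).comp hχ).linearIndependent
    _ (fun a ↦ Submodule.mem_iInf _ |>.mpr fun i ↦
      eigenspace_le_maxGenEigenspace (mem_eigenspace_iff.mpr (hv a i))) hv0

theorem Representation.span_range_apply_eq_top {K G V : Type*} [Field K] [Monoid G]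
    [AddCommGroup V] [Module K V] (ρ : Representation K G V) [ρ.IsIrreducible] {w : V}
    (hw : w ≠ 0) : Submodule.span K (Set.range fun g ↦ ρ g w) = ⊤ := by
  let σ : Subrepresentation ρ :=
    ⟨Submodule.span K (Set.range fun g ↦ ρ g w), fun g v hv ↦ by
      refine (Submodule.map_span_le _ _ _).mpr ?_ (Submodule.mem_map_of_mem hv)
      rintro _ ⟨h, rfl⟩
      exact Submodule.subset_span ⟨g * h, by simp⟩⟩
  have hwσ : w ∈ σ.toSubmodule := Submodule.subset_span ⟨1, by simp⟩
  have hσ : σ ≠ ⊥ := fun h ↦ hw <| (Submodule.mem_bot K).mp (by rw [h] at hwσ; exact hwσ)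
  exact congrArg Subrepresentation.toSubmodule ((IsSimpleOrder.eq_bot_or_eq_top σ).resolve_left hσ)

open scoped commutatorElement

section

variable {G : Type*} [Group G] {K : Subgroup G}

theorem Subgroup.conj_commutatorElement_of_commutator_le
    (hKab : ∀ a b : G, a ∈ K → b ∈ K → a * b = b * a) (hGK : _root_.commutator G ≤ K)
    {h k : G} (hk : k ∈ K) (g : G) : g⁻¹ * ⁅h, k⁆ * g = ⁅h, g⁻¹ * k * g⁆ := by
  have hy : g⁻¹ * k * g ∈ K := by
    simpa using (Subgroup.Normal.of_commutator_le G hGK).conj_mem k hk g⁻¹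
  have hc : ⁅h⁻¹, g⁻¹⁆ ∈ K :=
    hGK (Subgroup.commutator_mem_commutator (Subgroup.mem_top _) (Subgroup.mem_top _))
  -- `g⁻¹ h g = h ⁅h⁻¹, g⁻¹⁆` differs from `h` by an element of `K`, which commutes with `g⁻¹ k g`
  have hcomm := hKab _ _ hc hy
  simp only [commutatorElement_def, inv_inv] at hcomm ⊢
  calc g⁻¹ * (h * k * h⁻¹ * k⁻¹) * g
      = h * (h⁻¹ * g⁻¹ * h * g * (g⁻¹ * k * g)) * (h⁻¹ * g⁻¹ * h * g)⁻¹ * h⁻¹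
        * (g⁻¹ * k * g)⁻¹ := by group
    _ = h * (g⁻¹ * k * g * (h⁻¹ * g⁻¹ * h * g)) * (h⁻¹ * g⁻¹ * h * g)⁻¹ * h⁻¹
        * (g⁻¹ * k * g)⁻¹ := by rw [hcomm]
    _ = h * (g⁻¹ * k * g) * h⁻¹ * (g⁻¹ * k * g)⁻¹ := by group

theorem Subgroup.centralizer_le_of_maximal
    (hKab : ∀ a b : G, a ∈ K → b ∈ K → a * b = b * a) (hGK : _root_.commutator G ≤ K)
    (hmax : ∀ K' : Subgroup G, K'.Normal →
      (∀ a b : G, a ∈ K' → b ∈ K' → a * b = b * a) → K ≤ K' → K' = K) :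
    Subgroup.centralizer K ≤ K := by
  intro h hh
  rw [Subgroup.mem_centralizer_iff] at hh
  set K' := Subgroup.closure (insert h (K : Set G))
  have hKK' : K ≤ K' := fun k hk ↦ Subgroup.subset_closure (Set.mem_insert_of_mem h hk)
  have hgen : ∀ x ∈ insert h (K : Set G), ∀ y ∈ insert h (K : Set G), x * y = y * x := by
    rintro x (rfl | hx) y (rfl | hy)
    exacts [rfl, (hh y hy).symm, hh x hx, hKab x y hx hy]
  have hK'ab : ∀ a b : G, a ∈ K' → b ∈ K' → a * b = b * a := fun a b ha hb ↦
    congrArg Subtype.val ((Subgroup.isMulCommutative_closure hgen).is_comm.comm ⟨a, ha⟩ ⟨b, hb⟩)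
  rw [← hmax K' (.of_commutator_le G (hGK.trans hKK')) hK'ab hKK']
  exact Subgroup.subset_closure (Set.mem_insert h _)

theorem Subgroup.injective_conjNormal_out [K.Normal] {α : Type*} {χ : K → α}
    (hstab : ∀ h : G, (∀ k : K, χ (MulAut.conjNormal h k) = χ k) → h ∈ K) :
    Function.Injective fun (q : G ⧸ K) (k : K) ↦ χ ((MulAut.conjNormal q.out).symm k) := by
  intro q q' hqq'
  rw [← q.out_eq', ← q'.out_eq', QuotientGroup.eq]
  refine hstab _ fun k ↦ ?_
  have := congrFun hqq' (MulAut.conjNormal q'.out k)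
  simp only [MulEquiv.symm_apply_apply] at this
  rw [← this, ← MulAut.inv_def, ← map_inv, ← MulAut.mul_apply, ← map_mul]

end

namespace Representation

variable {F G V : Type*} [Field F] [Group G] [AddCommGroup V] [Module F V]
  (ρ : Representation F G V) {K : Subgroup G} {lam : K →* F} {w : V}

theorem span_range_apply_out_eq (hw : ∀ k : K, ρ k w = lam k • w) :
    Submodule.span F (Set.range fun q : G ⧸ K ↦ ρ q.out w) =
      Submodule.span F (Set.range fun g ↦ ρ g w) := by
  refine le_antisymm (Submodule.span_mono (Set.range_subset_iff.mpr fun q ↦ ⟨q.out, rfl⟩)) ?_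
  refine Submodule.span_le.mpr ?_
  rintro - ⟨g, rfl⟩
  dsimp only
  set q : G ⧸ K := QuotientGroup.mk g
  have hk : q.out⁻¹ * g ∈ K := QuotientGroup.eq.mp q.out_eq'
  have : ρ g w = lam ⟨_, hk⟩ • ρ q.out w := by
    rw [← map_smul, ← hw ⟨_, hk⟩, ← End.mul_apply, ← map_mul, mul_inv_cancel_left]
  rw [SetLike.mem_coe, this]
  exact Submodule.smul_mem _ _ (Submodule.subset_span ⟨q, rfl⟩)

variable [K.Normal]

theorem apply_apply_eq_conj_smul (hw : ∀ k : K, ρ k w = lam k • w) (g : G) (k : K) :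
    ρ k (ρ g w) = lam ((MulAut.conjNormal g).symm k) • ρ g w := by
  have : (k : G) * g = g * ((MulAut.conjNormal g).symm k : K) := by
    rw [MulAut.conjNormal_symm_apply]; group
  rw [← End.mul_apply, ← map_mul, this, map_mul, End.mul_apply, hw, map_smul]

theorem mem_centralizer_of_conj_invariant (hρ : Function.Injective ρ)
    (hKab : ∀ a b : G, a ∈ K → b ∈ K → a * b = b * a) (hGK : commutator G ≤ K)
    (hw : ∀ k : K, ρ k w = lam k • w) (hspan : Submodule.span F (Set.range fun g ↦ ρ g w) = ⊤)
    {h : G} (hh : ∀ k : K, lam (MulAut.conjNormal h k) = lam k) :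
    h ∈ Subgroup.centralizer K := by
  refine Subgroup.mem_centralizer_iff.mpr fun k hk ↦ ?_
  have hc : ⁅h, k⁆ ∈ K :=
    hGK (Subgroup.commutator_mem_commutator (Subgroup.mem_top _) (Subgroup.mem_top _))
  have hlam : ∀ g, lam ((MulAut.conjNormal g).symm ⟨_, hc⟩) = 1 := fun g ↦ by
    set y := (MulAut.conjNormal g).symm ⟨k, hk⟩
    have : (MulAut.conjNormal g).symm ⟨_, hc⟩ = MulAut.conjNormal h y * y⁻¹ := by
      ext
      simp only [MulAut.conjNormal_symm_apply]
      rw [Subgroup.conj_commutatorElement_of_commutator_le hKab hGK hk]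
      simp [y, MulAut.conjNormal_symm_apply, MulAut.conjNormal_apply, commutatorElement_def]
    rw [this, map_mul, hh, ← map_mul, mul_inv_cancel, map_one]
  have hρc : ρ ⁅h, k⁆ = ρ 1 := by
    refine (map_one ρ).symm ▸ LinearMap.ext_on_range hspan fun g ↦ ?_
    have := ρ.apply_apply_eq_conj_smul hw g ⟨_, hc⟩
    rwa [hlam, one_smul] at this
  exact (commutatorElement_eq_one_iff_mul_comm.mp (hρ hρc)).symm

end Representation

theorem stmt_9_general (G : Type) [Group G] [Finite G]
    (K : Subgroup G) (hKn : K.Normal)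
    (hKab : ∀ a b : G, a ∈ K → b ∈ K → a * b = b * a)
    (hGK : commutator G ≤ K)
    (hmax : ∀ K' : Subgroup G, K'.Normal →
      (∀ a b : G, a ∈ K' → b ∈ K' → a * b = b * a) → K ≤ K' → K' = K)
    (F : Type) [Field F] [IsAlgClosed F]
    (V : Type) [AddCommGroup V] [Module F V] [FiniteDimensional F V]
    (ρ : Representation F G V) (hfaith : Function.Injective ρ)
    (hirr : IsSimpleModule (MonoidAlgebra F G) ρ.asModule) :
    ∃ lam : K →* F, ∃ W : Submodule F V, Module.finrank F W = 1 ∧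
      (∀ k : K, ∀ w ∈ W, ρ (k : G) w = lam k • w) ∧
      Module.finrank F V = K.index := by
  have : ρ.IsIrreducible := (ρ.irreducible_iff_isSimpleModule_asModule).mpr hirr
  have : Nontrivial V := IsSimpleModule.nontrivial (MonoidAlgebra F G) ρ.asModule
  have hcomm : ∀ a b : K, Commute (ρ a) (ρ b) := fun a b ↦ by
    rw [Commute, SemiconjBy, ← map_mul, ← map_mul, hKab _ _ a.2 b.2]
  obtain ⟨lam, w, hw0, hw⟩ :=
    Representation.exists_monoidHom_eigenvector_of_commute (ρ.comp K.subtype) hcomm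
  replace hw : ∀ k : K, ρ k w = lam k • w := hw
  have hspan := ρ.span_range_apply_eq_top hw0
  have hstab (h : G) (hh : ∀ k : K, lam (MulAut.conjNormal h k) = lam k) : h ∈ K :=
    Subgroup.centralizer_le_of_maximal hKab hGK hmax
      (ρ.mem_centralizer_of_conj_invariant hfaith hKab hGK hw hspan hh)
  have hli : LinearIndependent F fun q : G ⧸ K ↦ ρ q.out w :=
    End.linearIndependent_of_forall_apply_eq_smul (fun k : K ↦ ρ k) hcomm
      (Subgroup.injective_conjNormal_out hstab)
      (fun q h ↦ hw0 (by simpa using congrArg (ρ q.out⁻¹) h))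
      (fun q k ↦ ρ.apply_apply_eq_conj_smul hw q.out k)
  let b := Basis.mk hli ((ρ.span_range_apply_out_eq hw).trans hspan).ge
  refine ⟨lam, F ∙ w, finrank_span_singleton hw0, fun k u hu ↦ ?_, ?_⟩
  · obtain ⟨a, rfl⟩ := Submodule.mem_span_singleton.mp hu
    rw [map_smul, hw, smul_comm]
  · rw [Module.finrank_eq_nat_card_basis b, Subgroup.index_eq_card]

/-- Let `G` be a finite metabelian group with a maximal abelian normal subgroup `K`
containing `G'`, and `F` an algebraically closed field of characteristic 0. Then every
faithful irreducible `F`-representation of `G` is induced from a one-dimensional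
representation of `K`: there is a character `lam : K → F*` and a `K`-stable line `W ⊆ V`
on which `K` acts via `lam`, with `dim V = [G : K]` (so `V ≅ Ind_K^G lam`). -/
theorem stmt_9 (G : Type) [Group G] [Finite G]
    (hmeta : ∀ a b : commutator G, a * b = b * a)
    (K : Subgroup G) (hKn : K.Normal)
    (hKab : ∀ a b : G, a ∈ K → b ∈ K → a * b = b * a)
    (hGK : commutator G ≤ K)
    (hmax : ∀ K' : Subgroup G, K'.Normal →
      (∀ a b : G, a ∈ K' → b ∈ K' → a * b = b * a) → K ≤ K' → K' = K)
    (F : Type) [Field F] [IsAlgClosed F] [CharZero F]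
    (V : Type) [AddCommGroup V] [Module F V] [FiniteDimensional F V]
    (ρ : Representation F G V) (hfaith : Function.Injective ρ)
    (hirr : IsSimpleModule (MonoidAlgebra F G) ρ.asModule) :
    ∃ lam : K →* F, ∃ W : Submodule F V, Module.finrank F W = 1 ∧
      (∀ k : K, ∀ w ∈ W, ρ (k : G) w = lam k • w) ∧
      Module.finrank F V = K.index :=
  stmt_9_general G K hKn hKab hGK hmax F V ρ hfaith hirr
end

section
/- Let G be a finite metabelian group with maximal abelian normal subgroup K containing G', let ρ and ρ' be two faithful irreducible representations of G over an algebraically closed field of characteristic 0, induced from linear characters λ, λ' of K respectively. Then ker(λ) and ker(λ') are core-free in G, and consequently F(λ) = F(λ') = F(ζ_{exp(K)}) for any characteristic-0 field F. -/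
/-!
If a normal subgroup `N` of `G` lies in `ker λ ≤ K`, then `N` fixes the line on which `K` acts
by `λ`. The `N`-invariants form a `G`-stable subspace because `N` is normal, so by irreducibility
they are everything, and faithfulness forces `N = 1`.

For the fields: if `m` is the exponent of the image of `λ`, the `m`-th powers of elements of `K`
lie in every `G`-conjugate of `ker λ` (conjugation preserves `K`), hence in its normal core, so
core-freeness gives `exp K ∣ m`. Hence the image of `λ` is a group of `exp K`-th roots of unity containing a primitive
one, and `F(λ) = F(ζ_{exp K})`.
-/

def Subgroup.IsCoreFree {G : Type*} [Group G] (H : Subgroup G) : Prop :=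
  ∀ N : Subgroup G, N.Normal → N ≤ H → N = ⊥

theorem Representation.isCoreFree_map_ker {k G V : Type*} [Field k] [Group G]
    [AddCommGroup V] [Module k V] (ρ : Representation k G V) [ρ.IsIrreducible]
    (hfaith : Function.Injective ρ) {K : Subgroup G} (χ : K →* kˣ) (W : Submodule k V)
    (hW : W ≠ ⊥) (hχ : ∀ x : K, ∀ w ∈ W, ρ x w = (χ x : k) • w) :
    (Subgroup.map K.subtype χ.ker).IsCoreFree := by
  intro N hN hNker
  let fixed : Subrepresentation ρ :=
    ⟨invariants (ρ.comp N.subtype), fun g _ hv => le_comap_invariants ρ N g hv⟩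
  have hW_fixed : W ≤ fixed.toSubmodule := fun w hw n => by
    obtain ⟨x, hx, hxn⟩ := hNker n.2
    simp [← hxn, hχ x w hw, MonoidHom.mem_ker.mp hx]
  have hfixed : fixed = ⊤ :=
    (eq_bot_or_eq_top fixed).resolve_left fun h =>
      hW (eq_bot_iff.mpr (by rw [h] at hW_fixed; exact hW_fixed))
  refine (Subgroup.eq_bot_iff_forall N).mpr fun n hn => hfaith ?_
  ext v
  have hv : v ∈ fixed := hfixed ▸ Submodule.mem_top
  simpa using hv ⟨n, hn⟩

theorem MonoidHom.exponent_range_eq_of_isCoreFree {G M : Type*} [Group G] [Group M]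
    {K : Subgroup G} [hK : K.Normal] (χ : K →* M)
    (hcore : (Subgroup.map K.subtype χ.ker).IsCoreFree) :
    Monoid.exponent χ.range = Monoid.exponent K := by
  refine Nat.dvd_antisymm (MonoidHom.exponent_dvd χ.rangeRestrict_surjective)
    (Monoid.exponent_dvd_of_forall_pow_eq_one fun x => ?_)
  set m := Monoid.exponent χ.range
  have hx_core : (x : G) ^ m ∈ (Subgroup.map K.subtype χ.ker).normalCore := fun g => by
    let y : K := ⟨g * x * g⁻¹, hK.conj_mem x x.2 g⟩
    refine ⟨y ^ m, ?_, by simp [y, conj_pow]⟩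
    simpa using congrArg Subtype.val (Monoid.pow_exponent_eq_one (⟨χ y, y, rfl⟩ : χ.range))
  rw [hcore _ (Subgroup.normalCore_normal _) (Subgroup.normalCore_le _)] at hx_core
  exact Subtype.ext (by simpa using hx_core)

theorem IntermediateField.adjoin_range_eq_adjoin_of_isPrimitiveRoot (F : Type*) {L M : Type*}
    [Field F] [Field L] [Algebra F L] [Group M] [Finite M] (χ : M →* Lˣ) {ζ : L}
    (hζ : IsPrimitiveRoot ζ (Monoid.exponent χ.range)) :
    adjoin F (Set.range fun x => (χ x : L)) = adjoin F {ζ} := by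
  have : Finite χ.range := (Set.finite_range χ).to_subtype
  have : NeZero (Monoid.exponent χ.range) := ⟨Monoid.exponent_ne_zero_of_finite⟩
  obtain ⟨u, hu⟩ :=
    Monoid.exists_orderOf_eq_exponent (Monoid.ExponentExists.of_finite (G := χ.range))
  obtain ⟨x₀, hx₀⟩ := u.2
  have hprim : IsPrimitiveRoot (χ x₀ : L) (Monoid.exponent χ.range) := by
    rw [← hu, ← Subgroup.orderOf_coe, ← orderOf_units, hx₀]
    exact IsPrimitiveRoot.orderOf _
  apply le_antisymm
  · rw [adjoin_le_iff]
    rintro _ ⟨x, rfl⟩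
    have hx : (χ x : L) ^ Monoid.exponent χ.range = 1 := by
      simpa using congrArg (fun u : χ.range => ((u : Lˣ) : L))
        (Monoid.pow_exponent_eq_one (⟨χ x, x, rfl⟩ : χ.range))
    obtain ⟨i, -, hi⟩ := hζ.eq_pow_of_pow_eq_one hx
    show (χ x : L) ∈ adjoin F {ζ}
    rw [← hi]
    exact pow_mem (mem_adjoin_simple_self F ζ) i
  · rw [adjoin_le_iff, Set.singleton_subset_iff]
    obtain ⟨i, -, hi⟩ := hprim.eq_pow_of_pow_eq_one hζ.pow_eq_one
    rw [← hi]
    exact pow_mem (subset_adjoin F (Set.range fun x => (χ x : L)) ⟨x₀, rfl⟩) i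

theorem stmt_14_general (G : Type) [Group G] [Finite G]
    (K : Subgroup G) (hKn : K.Normal)
    (F : Type) [Field F]
    (V V' : Type)
    [AddCommGroup V] [Module (AlgebraicClosure F) V]
    [AddCommGroup V'] [Module (AlgebraicClosure F) V']
    (ρ : Representation (AlgebraicClosure F) G V) (hfaith : Function.Injective ρ)
    (hirr : IsSimpleModule (MonoidAlgebra (AlgebraicClosure F) G) ρ.asModule)
    (ρ' : Representation (AlgebraicClosure F) G V') (hfaith' : Function.Injective ρ')
    (hirr' : IsSimpleModule (MonoidAlgebra (AlgebraicClosure F) G) ρ'.asModule)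
    (lam : K →* (AlgebraicClosure F)ˣ) (lam' : K →* (AlgebraicClosure F)ˣ)
    -- `ρ ≅ Ind_K^G lam`:
    (W : Submodule (AlgebraicClosure F) V)
    (hW1 : Module.finrank (AlgebraicClosure F) W = 1)
    (hWact : ∀ k : K, ∀ w ∈ W, ρ (k : G) w = (lam k : AlgebraicClosure F) • w)
    -- `ρ' ≅ Ind_K^G lam'`:
    (W' : Submodule (AlgebraicClosure F) V')
    (hW1' : Module.finrank (AlgebraicClosure F) W' = 1)
    (hWact' : ∀ k : K, ∀ w ∈ W', ρ' (k : G) w = (lam' k : AlgebraicClosure F) • w) :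
    (∀ N : Subgroup G, N.Normal → N ≤ Subgroup.map K.subtype lam.ker → N = ⊥) ∧
    (∀ N : Subgroup G, N.Normal → N ≤ Subgroup.map K.subtype lam'.ker → N = ⊥) ∧
    (∀ ζ : AlgebraicClosure F, IsPrimitiveRoot ζ (Monoid.exponent K) →
      IntermediateField.adjoin F (Set.range fun k : K => (lam k : AlgebraicClosure F)) =
          IntermediateField.adjoin F {ζ} ∧
      IntermediateField.adjoin F (Set.range fun k : K => (lam' k : AlgebraicClosure F)) =
          IntermediateField.adjoin F {ζ}) := by
  have := (ρ.irreducible_iff_isSimpleModule_asModule).mpr hirr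
  have := (ρ'.irreducible_iff_isSimpleModule_asModule).mpr hirr'
  have hcore := ρ.isCoreFree_map_ker hfaith lam W (by rintro rfl; simp at hW1) hWact
  have hcore' := ρ'.isCoreFree_map_ker hfaith' lam' W' (by rintro rfl; simp at hW1') hWact'
  refine ⟨hcore, hcore', fun ζ hζ => ⟨?_, ?_⟩⟩
  · rw [← lam.exponent_range_eq_of_isCoreFree hcore] at hζ
    exact IntermediateField.adjoin_range_eq_adjoin_of_isPrimitiveRoot F lam hζ
  · rw [← lam'.exponent_range_eq_of_isCoreFree hcore'] at hζ
    exact IntermediateField.adjoin_range_eq_adjoin_of_isPrimitiveRoot F lam' hζ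

/-- Let `G` be a finite metabelian group with maximal abelian normal subgroup `K`
containing `G'`, and let `ρ`, `ρ'` be two faithful irreducible representations of `G`
over the algebraic closure of a characteristic-0 field `F`, induced from linear
characters `lam`, `lam'` of `K` respectively (induction encoded by the existence of a
`K`-stable line on which `K` acts via the character, with `dim = [G : K]`). Then
`ker lam` and `ker lam'` are core-free in `G`, and `F(lam) = F(lam') = F(ζ_{exp K})`. -/
theorem stmt_14 (G : Type) [Group G] [Finite G]
    (hmeta : ∀ a b : commutator G, a * b = b * a)
    (K : Subgroup G) (hKn : K.Normal)
    (hKab : ∀ a b : G, a ∈ K → b ∈ K → a * b = b * a)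
    (hGK : commutator G ≤ K)
    (hmax : ∀ K' : Subgroup G, K'.Normal →
      (∀ a b : G, a ∈ K' → b ∈ K' → a * b = b * a) → K ≤ K' → K' = K)
    (F : Type) [Field F] [CharZero F]
    (V V' : Type)
    [AddCommGroup V] [Module (AlgebraicClosure F) V]
    [FiniteDimensional (AlgebraicClosure F) V]
    [AddCommGroup V'] [Module (AlgebraicClosure F) V']
    [FiniteDimensional (AlgebraicClosure F) V']
    (ρ : Representation (AlgebraicClosure F) G V) (hfaith : Function.Injective ρ)
    (hirr : IsSimpleModule (MonoidAlgebra (AlgebraicClosure F) G) ρ.asModule)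
    (ρ' : Representation (AlgebraicClosure F) G V') (hfaith' : Function.Injective ρ')
    (hirr' : IsSimpleModule (MonoidAlgebra (AlgebraicClosure F) G) ρ'.asModule)
    (lam : K →* (AlgebraicClosure F)ˣ) (lam' : K →* (AlgebraicClosure F)ˣ)
    -- `ρ ≅ Ind_K^G lam`:
    (W : Submodule (AlgebraicClosure F) V)
    (hW1 : Module.finrank (AlgebraicClosure F) W = 1)
    (hWact : ∀ k : K, ∀ w ∈ W, ρ (k : G) w = (lam k : AlgebraicClosure F) • w)
    (hind : Module.finrank (AlgebraicClosure F) V = K.index)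
    -- `ρ' ≅ Ind_K^G lam'`:
    (W' : Submodule (AlgebraicClosure F) V')
    (hW1' : Module.finrank (AlgebraicClosure F) W' = 1)
    (hWact' : ∀ k : K, ∀ w ∈ W', ρ' (k : G) w = (lam' k : AlgebraicClosure F) • w)
    (hind' : Module.finrank (AlgebraicClosure F) V' = K.index) :
    (∀ N : Subgroup G, N.Normal → N ≤ Subgroup.map K.subtype lam.ker → N = ⊥) ∧
    (∀ N : Subgroup G, N.Normal → N ≤ Subgroup.map K.subtype lam'.ker → N = ⊥) ∧
    (∀ ζ : AlgebraicClosure F, IsPrimitiveRoot ζ (Monoid.exponent K) →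
      IntermediateField.adjoin F (Set.range fun k : K => (lam k : AlgebraicClosure F)) =
          IntermediateField.adjoin F {ζ} ∧
      IntermediateField.adjoin F (Set.range fun k : K => (lam' k : AlgebraicClosure F)) =
          IntermediateField.adjoin F {ζ}) :=
  stmt_14_general G K hKn F V V' ρ hfaith hirr ρ' hfaith' hirr' lam lam' W hW1 hWact W' hW1' hWact'
end

section
/- Let n ≥ 4 and G = SD_{2^n} be the semidihedral group of order 2^n. Then every faithful irreducible complex representation ρ of G with character χ satisfies Q(χ) = Q(ζ − ζ^{-1}) where ζ = ζ_{2^{n-1}}, and the Schur index m_Q(ρ) = 1. -/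
lemma aux_rec (K : IntermediateField ℚ ℂ) (ζ : ℂ) (hζ : ζ ≠ 0)
    (hε : ζ - ζ⁻¹ ∈ K) : ∀ i : ℕ, ζ ^ i + (-1) ^ i * (ζ⁻¹) ^ i ∈ K := by
  have key : ∀ i : ℕ, (ζ ^ i + (-1) ^ i * ζ⁻¹ ^ i ∈ K) ∧
      (ζ ^ (i+1) + (-1) ^ (i+1) * ζ⁻¹ ^ (i+1) ∈ K) := by
    intro i
    induction i with
    | zero =>
      constructor
      · have h2 : (ζ ^ 0 + (-1) ^ 0 * ζ⁻¹ ^ 0 : ℂ) = 1 + 1 := by norm_num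
        rw [h2]; exact K.add_mem K.one_mem K.one_mem
      · have h2 : (ζ ^ 1 + (-1) ^ 1 * ζ⁻¹ ^ 1 : ℂ) = ζ - ζ⁻¹ := by ring
        rw [h2]; exact hε
    | succ i ih =>
      refine ⟨ih.2, ?_⟩
      have hab : ζ * ζ⁻¹ = 1 := mul_inv_cancel₀ hζ
      have hid : ζ ^ (i+2) + (-1) ^ (i+2) * ζ⁻¹ ^ (i+2)
          = (ζ - ζ⁻¹) * (ζ ^ (i+1) + (-1) ^ (i+1) * ζ⁻¹ ^ (i+1)) + (ζ ^ i + (-1) ^ i * ζ⁻¹ ^ i) := by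
        linear_combination (ζ ^ i + (-1) ^ i * ζ⁻¹ ^ i) * hab
      rw [show i + 1 + 1 = i + 2 from rfl, hid]
      exact K.add_mem (K.mul_mem hε ih.2) ih.1
  exact fun i => (key i).1

lemma aux_prim (M : ℕ) (hM0 : M ≠ 0) (hM2 : 2 ∣ M) (ζ ζ' : ℂ)
    (hζ : IsPrimitiveRoot ζ M) (hζ' : IsPrimitiveRoot ζ' M) :
    ζ' - ζ'⁻¹ ∈ IntermediateField.adjoin ℚ {ζ - ζ⁻¹} := by
  haveI : NeZero M := ⟨hM0⟩
  obtain ⟨t, htlt, ht⟩ := hζ.eq_pow_of_pow_eq_one hζ'.pow_eq_one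
  have hζ0 : ζ ≠ 0 := hζ.ne_zero hM0
  have htodd : Odd t := by
    rcases Nat.even_or_odd t with he | ho
    · exfalso
      obtain ⟨s, hs⟩ := he
      have hM2' : 2 * (M / 2) = M := Nat.two_mul_div_two_of_even (even_iff_two_dvd.mpr hM2)
      have hpow : ζ' ^ (M / 2) = 1 := by
        rw [← ht, ← pow_mul]
        have hts : t * (M / 2) = M * s := by
          subst hs
          calc (s + s) * (M / 2) = s * (2 * (M / 2)) := by ring
            _ = M * s := by rw [hM2']; ring
        rw [hts, pow_mul, hζ.pow_eq_one, one_pow]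
      have hdvd := hζ'.dvd_of_pow_eq_one _ hpow
      have hMpos : 0 < M := Nat.pos_of_ne_zero hM0
      have hlt : M / 2 < M := Nat.div_lt_self hMpos one_lt_two
      have hhalfpos : 0 < M / 2 := by omega
      exact absurd (Nat.le_of_dvd hhalfpos hdvd) (by omega)
    · exact ho
  have hval : ζ' - ζ'⁻¹ = ζ ^ t + (-1) ^ t * ζ⁻¹ ^ t := by
    rw [← ht, htodd.neg_one_pow, ← inv_pow]
    ring
  rw [hval]
  exact aux_rec _ ζ hζ0 (IntermediateField.mem_adjoin_simple_self ℚ (ζ - ζ⁻¹)) t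

lemma aux_lift {G : Type} [Group G] (x y : G) (hgen : Subgroup.closure {x, y} = ⊤)
    {K : Type} [Field K] (φ : K →+* ℂ) (F : G → Matrix (Fin 2) (Fin 2) ℂ)
    (hFone : F 1 = 1) (hFmul : ∀ g h, F (g * h) = F g * F h)
    (hFx : ∃ M : Matrix (Fin 2) (Fin 2) K, M.map φ = F x)
    (hFy : ∃ M : Matrix (Fin 2) (Fin 2) K, M.map φ = F y) :
    ∀ g, ∃ M : Matrix (Fin 2) (Fin 2) K, M.map φ = F g := by
  let S : Subgroup G :=
    { carrier := {g | ∃ M : Matrix (Fin 2) (Fin 2) K, M.map φ = F g}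
      one_mem' := ⟨1, by rw [Matrix.map_one φ φ.map_zero φ.map_one, hFone]⟩
      mul_mem' := by
        rintro a b ⟨M, hM⟩ ⟨N, hN⟩
        exact ⟨M * N, by rw [Matrix.map_mul, hM, hN, hFmul]⟩
      inv_mem' := by
        rintro g ⟨M, hM⟩
        have h1 : F g * F g⁻¹ = 1 := by rw [← hFmul, mul_inv_cancel, hFone]
        have h2 : F g⁻¹ * F g = 1 := by rw [← hFmul, inv_mul_cancel, hFone]
        have hu : IsUnit (F g) := ⟨⟨F g, F g⁻¹, h1, h2⟩, rfl⟩
        have hdet : IsUnit M.det := by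
          rw [isUnit_iff_ne_zero]
          intro h0
          have hz : (F g).det = 0 := by rw [← hM, ← RingHom.mapMatrix_apply, ← RingHom.map_det, h0, map_zero]
          have hud := (Matrix.isUnit_iff_isUnit_det _).mp hu
          rw [hz] at hud
          exact (isUnit_iff_ne_zero.mp hud) rfl
        refine ⟨M⁻¹, ?_⟩
        have hMM : M * M⁻¹ = 1 := Matrix.mul_nonsing_inv M hdet
        have h3 : F g * (M⁻¹).map φ = 1 := by
          rw [← hM, ← Matrix.map_mul, hMM, Matrix.map_one φ φ.map_zero φ.map_one]
        calc (M⁻¹).map φ = (F g⁻¹ * F g) * (M⁻¹).map φ := by rw [h2, one_mul]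
          _ = F g⁻¹ * (F g * (M⁻¹).map φ) := by rw [mul_assoc]
          _ = F g⁻¹ := by rw [h3, mul_one] }
  have hle : Subgroup.closure {x, y} ≤ S := by
    rw [Subgroup.closure_le]
    rintro g hg
    simp only [Set.mem_insert_iff, Set.mem_singleton_iff] at hg
    rcases hg with rfl | rfl
    exacts [hFx, hFy]
  intro g
  exact hle (by rw [hgen]; trivial)


/-- The character field `F(χ)` of a representation `ρ` over an extension `Kb` of `F`:
the subfield of `Kb` generated over `F` by the character values `χ(g) = tr ρ(g)`. -/
noncomputable def charField (F Kb : Type) [Field F] [Field Kb] [Algebra F Kb]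
    {G V : Type} [Group G] [AddCommGroup V] [Module Kb V]
    (ρ : Representation Kb G V) : IntermediateField F Kb :=
  IntermediateField.adjoin F (Set.range fun g => LinearMap.trace Kb V (ρ g))

/-- The Schur index of `ρ` with respect to `F`: the smallest positive integer `m` such
that `m·χ` is the character of a representation of `G` over the character field `F(χ)`. -/
noncomputable def schurIndex (F Kb : Type) [Field F] [Field Kb] [Algebra F Kb]
    {G V : Type} [Group G] [AddCommGroup V] [Module Kb V]
    (ρ : Representation Kb G V) : ℕ :=
  sInf {m : ℕ | 0 < m ∧ ∃ d : ℕ,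
    ∃ σ : G →* Matrix (Fin d) (Fin d) (charField F Kb ρ),
      ∀ g : G, algebraMap (charField F Kb ρ) Kb (Matrix.trace (σ g)) =
        (m : Kb) * LinearMap.trace Kb V (ρ g)}

/-- Let `n ≥ 4` and `G = SD_{2^n}` the semidihedral group of order `2^n`, presented as
`⟨x, y | x^(2^(n-1)) = y² = 1, y⁻¹xy = x^(-1+2^(n-2))⟩`. Then every faithful irreducible
complex representation `ρ` of `G` with character `χ` satisfies `ℚ(χ) = ℚ(ζ − ζ⁻¹)` where
`ζ = ζ_{2^(n-1)}`, and the Schur index `m_ℚ(ρ) = 1`. -/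
theorem stmt_17 (n : ℕ) (hn : 4 ≤ n)
    (G : Type) [Group G] (x y : G)
    (hx : orderOf x = 2 ^ (n - 1)) (hy : y ^ 2 = 1)
    (hconj : y⁻¹ * x * y = x ^ (2 ^ (n - 2) - 1))
    (hgen : Subgroup.closure {x, y} = ⊤)
    (hcard : Nat.card G = 2 ^ n)
    (V : Type) [AddCommGroup V] [Module ℂ V] [FiniteDimensional ℂ V]
    (ρ : Representation ℂ G V)
    (hfaith : Function.Injective ρ)
    (hirr : IsSimpleModule (MonoidAlgebra ℂ G) ρ.asModule) :
    (∀ ζ : ℂ, IsPrimitiveRoot ζ (2 ^ (n - 1)) →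
      charField ℚ ℂ ρ = IntermediateField.adjoin ℚ {ζ - ζ⁻¹}) ∧
    schurIndex ℚ ℂ ρ = 1 := by
  classical
  haveI hGfin : Finite G := Nat.finite_of_card_ne_zero (by rw [hcard]; positivity)
  haveI hVnt : Nontrivial V := IsSimpleModule.nontrivial (MonoidAlgebra ℂ G) ρ.asModule
  set N1 : ℕ := 2 ^ (n - 1) with hN1
  set M2 : ℕ := 2 ^ (n - 2) with hM2
  set k : ℕ := M2 - 1 with hk
  have hM2pos : 1 ≤ M2 := Nat.one_le_two_pow
  have hN1M2 : N1 = M2 * 2 := by rw [hN1, hM2, ← pow_succ]; congr 1; omega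
  have hM2e : M2 = 2 * 2 ^ (n - 3) := by rw [hM2, ← pow_succ']; congr 1; omega
  have hM2lt : M2 < N1 := by omega
  -- eigenvector
  obtain ⟨ζ, hζev⟩ := Module.End.exists_eigenvalue (ρ x)
  obtain ⟨v, hv⟩ := hζev.exists_hasEigenvector
  have hv0 : v ≠ 0 := hv.2
  have hxv : ρ x v = ζ • v := hv.apply_eq_smul
  -- powers on eigenvectors
  have hpow : ∀ (u : V) (μ : ℂ), ρ x u = μ • u → ∀ m : ℕ, ρ (x ^ m) u = μ ^ m • u := by
    intro u μ h m
    induction m with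
    | zero => simp
    | succ m ih =>
      rw [pow_succ, map_mul, Module.End.mul_apply, h, map_smul, ih, smul_smul, ← pow_succ']
  have hxN : x ^ N1 = 1 := by rw [← hx]; exact pow_orderOf_eq_one x
  have hζN : ζ ^ N1 = 1 := by
    have h1 := hpow v ζ hxv N1
    rw [hxN, map_one, Module.End.one_apply] at h1
    have h2 : (ζ ^ N1 - 1) • v = 0 := by rw [sub_smul, one_smul, ← h1, sub_self]
    rcases smul_eq_zero.mp h2 with h | h
    · exact sub_eq_zero.mp h
    · exact absurd h hv0
  have hζ0 : ζ ≠ 0 := by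
    intro h
    rw [h, zero_pow (by positivity : N1 ≠ 0)] at hζN
    exact zero_ne_one hζN
  set w : V := ρ y v with hw
  have hyw : ρ y w = v := by
    rw [hw, ← Module.End.mul_apply, ← map_mul, ← sq, hy, map_one, Module.End.one_apply]
  have hw0 : w ≠ 0 := by
    intro h
    apply hv0
    rw [← hyw, h, map_zero]
  have hxyrel : x * y = y * x ^ k := by
    calc x * y = y * (y⁻¹ * x * y) := by group
      _ = y * x ^ k := by rw [hconj]
  have hxw : ρ x w = ζ ^ k • w := by
    calc ρ x w = ρ (x * y) v := by rw [map_mul, Module.End.mul_apply, hw]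
      _ = ρ y (ρ (x ^ k) v) := by rw [hxyrel, map_mul, Module.End.mul_apply]
      _ = ρ y (ζ ^ k • v) := by rw [hpow v ζ hxv k]
      _ = ζ ^ k • w := by rw [map_smul, hw]
  set p : Submodule ℂ V := Submodule.span ℂ ({v, w} : Set V) with hp
  have hvp : v ∈ p := Submodule.subset_span (by left; rfl)
  have hwp : w ∈ p := Submodule.subset_span (by right; rfl)
  have hmemgen : ∀ g : G, ρ g v ∈ p → ρ g w ∈ p → ∀ u ∈ p, ρ g u ∈ p := by
    intro g h1 h2 u hu
    have hle : p ≤ Submodule.comap (ρ g) p := by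
      rw [hp, Submodule.span_le]
      rintro z hz
      simp only [Set.mem_insert_iff, Set.mem_singleton_iff] at hz
      rcases hz with rfl | rfl
      · simpa only [SetLike.mem_coe, Submodule.mem_comap] using h1
      · simpa only [SetLike.mem_coe, Submodule.mem_comap] using h2
    exact hle hu
  have hSg : ∀ g : G, ∀ u ∈ p, ρ g u ∈ p := by
    have hinv : ∀ g : G, (∀ u ∈ p, ρ g u ∈ p) → ∀ u ∈ p, ρ g⁻¹ u ∈ p := by
      intro g hg u hu
      have hord : g ^ (orderOf g - 1) = g⁻¹ := by
        have h1 : orderOf g ≠ 0 := (orderOf_pos g).ne'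
        have h2 : g * g ^ (orderOf g - 1) = 1 := by
          rw [← pow_succ', Nat.sub_add_cancel (Nat.one_le_iff_ne_zero.mpr h1)]
          exact pow_orderOf_eq_one g
        exact (inv_eq_of_mul_eq_one_right h2).symm
      rw [← hord]
      have hpm : ∀ m : ℕ, ∀ u ∈ p, ρ (g ^ m) u ∈ p := by
        intro m
        induction m with
        | zero => intro u hu; simpa using hu
        | succ m ih =>
          intro u hu
          rw [pow_succ, map_mul, Module.End.mul_apply]
          exact ih _ (hg u hu)
      exact hpm _ u hu
    let S : Subgroup G :=
      { carrier := {g | ∀ u ∈ p, ρ g u ∈ p}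
        one_mem' := by intro u hu; simpa using hu
        mul_mem' := by
          intro a b ha hb u hu
          rw [map_mul, Module.End.mul_apply]
          exact ha _ (hb u hu)
        inv_mem' := fun {g} hg => hinv g hg }
    have hxS : x ∈ S := hmemgen x (by rw [hxv]; exact p.smul_mem _ hvp)
      (by rw [hxw]; exact p.smul_mem _ hwp)
    have hyS : y ∈ S := hmemgen y (by rw [← hw]; exact hwp) (by rw [hyw]; exact hvp)
    have hle : Subgroup.closure {x, y} ≤ S := by
      rw [Subgroup.closure_le]
      rintro g hg
      simp only [Set.mem_insert_iff, Set.mem_singleton_iff] at hg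
      rcases hg with rfl | rfl
      exacts [hxS, hyS]
    intro g
    exact hle (by rw [hgen]; trivial)
  have hptop : ∀ u : V, u ∈ p := by
    let q : Submodule (MonoidAlgebra ℂ G) ρ.asModule :=
      { carrier := (p : Set V)
        add_mem' := fun {a b} ha hb => p.add_mem ha hb
        zero_mem' := p.zero_mem
        smul_mem' := by
          intro r u hu
          change V at u
          show ρ.asAlgebraHom r u ∈ p
          induction r using MonoidAlgebra.induction with
          | zero => rw [map_zero]; exact p.zero_mem
          | single_add g c f hg hc ih =>
            rw [map_add, LinearMap.add_apply]
            refine p.add_mem ?_ ih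
            rw [Representation.asAlgebraHom_single, LinearMap.smul_apply]
            exact p.smul_mem _ (hSg g u hu) }
    have hq : q = ⊤ := by
      haveI := hirr
      rcases eq_bot_or_eq_top q with hbot | htop
      · exfalso
        have hvq : v ∈ q := hvp
        rw [hbot] at hvq
        exact hv0 ((Submodule.mem_bot (M := ρ.asModule) (MonoidAlgebra ℂ G)).mp hvq)
      · exact htop
    intro u
    have : u ∈ q := by rw [hq]; trivial
    exact this
  -- ζ ^ M2 = -1
  have hcval : ζ ^ M2 = -1 := by
    have hc2 : (ζ ^ M2) ^ 2 = 1 := by rw [← pow_mul, ← hN1M2]; exact hζN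
    have h12 : (ζ ^ M2 - 1) * (ζ ^ M2 + 1) = 0 := by linear_combination hc2
    rcases mul_eq_zero.mp h12 with h | h
    · exfalso
      have hone : ζ ^ M2 = 1 := sub_eq_zero.mp h
      have hker : p ≤ LinearMap.ker (ρ (x ^ M2) - LinearMap.id) := by
        rw [hp, Submodule.span_le]
        rintro z hz
        simp only [Set.mem_insert_iff, Set.mem_singleton_iff] at hz
        rcases hz with hzv | hzw
        · rw [hzv, SetLike.mem_coe, LinearMap.mem_ker, LinearMap.sub_apply, LinearMap.id_apply,
            hpow v ζ hxv M2, hone, one_smul, sub_self]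
        · rw [hzw, SetLike.mem_coe, LinearMap.mem_ker, LinearMap.sub_apply, LinearMap.id_apply,
            hpow w (ζ ^ k) hxw M2]
          have hkM : (ζ ^ k) ^ M2 = (ζ ^ M2) ^ k := by
            rw [← pow_mul, mul_comm, pow_mul]
          rw [hkM, hone, one_pow, one_smul, sub_self]
      have hXid : x ^ M2 = 1 := by
        apply hfaith
        rw [map_one]
        apply LinearMap.ext
        intro u
        have := hker (hptop u)
        rw [LinearMap.mem_ker, LinearMap.sub_apply, LinearMap.id_apply, sub_eq_zero] at this
        rw [this, Module.End.one_apply]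
      have hdvd : orderOf x ∣ M2 := orderOf_dvd_of_pow_eq_one hXid
      rw [hx] at hdvd
      exact absurd (Nat.le_of_dvd (by omega) hdvd) (by omega)
    · exact eq_neg_of_add_eq_zero_left h
  -- primitivity
  have hζprim : IsPrimitiveRoot ζ N1 := by
    refine ⟨hζN, ?_⟩
    intro l hl
    have hg : ζ ^ Nat.gcd N1 l = 1 := pow_gcd_eq_one.mpr ⟨hζN, hl⟩
    have hgd : Nat.gcd N1 l ∣ 2 ^ (n - 1) := by rw [← hN1]; exact Nat.gcd_dvd_left N1 l
    obtain ⟨j, hj, hjeq⟩ := (Nat.dvd_prime_pow Nat.prime_two).mp hgd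
    by_cases hjn : j ≤ n - 2
    · exfalso
      have hMg : ζ ^ M2 = 1 := by
        have hsplit : M2 = Nat.gcd N1 l * 2 ^ (n - 2 - j) := by
          rw [hjeq, ← pow_add, hM2]
          congr 1
          omega
        rw [hsplit, pow_mul, hg, one_pow]
      rw [hcval] at hMg
      norm_num at hMg
    · have hj' : j = n - 1 := by
        have : Nat.gcd N1 l ≤ N1 := Nat.le_of_dvd (by positivity) hgd
        rw [hjeq, hN1] at this
        have := (Nat.pow_le_pow_iff_right (by norm_num : 1 < 2)).mp this
        omega
      have hgN : Nat.gcd N1 l = N1 := by rw [hjeq, hj', hN1]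
      rw [← hgN]
      exact Nat.gcd_dvd_right N1 l
  have hz2 : ζ ^ 2 ≠ -1 := by
    intro h
    have hMg : ζ ^ M2 = 1 := by
      rw [hM2e, pow_mul, h]
      exact Even.neg_one_pow (Nat.even_pow.mpr ⟨even_two, by omega⟩)
    rw [hcval] at hMg
    norm_num at hMg
  have hmulinv : ζ * ζ⁻¹ = 1 := mul_inv_cancel₀ hζ0
  have hzz : ζ + ζ⁻¹ ≠ 0 := by
    intro h
    apply hz2
    linear_combination ζ * h - hmulinv
  have hkval : ζ ^ k = -ζ⁻¹ := by
    have h1 : ζ ^ k * ζ = -1 := by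
      rw [← pow_succ, show k + 1 = M2 by omega]
      exact hcval
    have h2 : ζ ^ k = -1 / ζ := by rw [eq_div_iff hζ0]; exact h1
    rw [h2]
    field_simp
  have hxw' : ρ x w = (-ζ⁻¹) • w := by rw [hxw, hkval]
  have hne : (ζ : ℂ) ≠ -ζ⁻¹ := by
    intro h
    apply hz2
    linear_combination ζ * h - hmulinv
  have livw : LinearIndependent ℂ ![v, w] := by
    apply Module.End.eigenvectors_linearIndependent' (ρ x) ![ζ, -ζ⁻¹] ?_ ![v, w] ?_
    · intro i j hij
      fin_cases i <;> fin_cases j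
      · rfl
      · exact absurd (show ζ = -ζ⁻¹ by simpa using hij) hne
      · exact absurd ((show -ζ⁻¹ = ζ by simpa using hij)).symm hne
      · rfl
    · intro i
      fin_cases i
      · exact ⟨Module.End.mem_eigenspace_iff.mpr hxv, hv0⟩
      · exact ⟨Module.End.mem_eigenspace_iff.mpr hxw', hw0⟩
  have hvw := LinearIndependent.pair_iff.mp livw
  set e₁ : V := v + w with he₁
  set e₂ : V := ζ • v - ζ⁻¹ • w with he₂
  have li2 : LinearIndependent ℂ ![e₁, e₂] := by
    rw [LinearIndependent.pair_iff]
    intro s t hst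
    have hexp : s • e₁ + t • e₂ = (s + t * ζ) • v + (s - t * ζ⁻¹) • w := by
      rw [he₁, he₂]; module
    rw [hexp] at hst
    obtain ⟨h1, h2⟩ := hvw _ _ hst
    have ht : t = 0 := by
      have h3 : t * (ζ + ζ⁻¹) = 0 := by linear_combination h1 - h2
      rcases mul_eq_zero.mp h3 with h | h
      exacts [h, absurd h hzz]
    refine ⟨?_, ht⟩
    rw [ht] at h1
    simpa using h1
  have hspan2 : ⊤ ≤ Submodule.span ℂ (Set.range ![e₁, e₂]) := by
    have he1m : e₁ ∈ Submodule.span ℂ (Set.range ![e₁, e₂]) := Submodule.subset_span ⟨0, rfl⟩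
    have he2m : e₂ ∈ Submodule.span ℂ (Set.range ![e₁, e₂]) := Submodule.subset_span ⟨1, rfl⟩
    have hvm : v ∈ Submodule.span ℂ (Set.range ![e₁, e₂]) := by
      have hveq : (ζ + ζ⁻¹)⁻¹ • (ζ⁻¹ • e₁ + e₂) = v := by
        have h1 : ζ⁻¹ • e₁ + e₂ = (ζ⁻¹ + ζ) • v := by rw [he₁, he₂]; module
        rw [h1, smul_smul, add_comm ζ⁻¹ ζ, inv_mul_cancel₀ hzz, one_smul]
      rw [← hveq]
      exact Submodule.smul_mem _ _ (Submodule.add_mem _ (Submodule.smul_mem _ _ he1m) he2m)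
    have hwm : w ∈ Submodule.span ℂ (Set.range ![e₁, e₂]) := by
      have hweq : (ζ + ζ⁻¹)⁻¹ • (ζ • e₁ - e₂) = w := by
        have h1 : ζ • e₁ - e₂ = (ζ + ζ⁻¹) • w := by rw [he₁, he₂]; module
        rw [h1, smul_smul, inv_mul_cancel₀ hzz, one_smul]
      rw [← hweq]
      exact Submodule.smul_mem _ _ (Submodule.sub_mem _ (Submodule.smul_mem _ _ he1m) he2m)
    intro u _
    have hup := hptop u
    have hle : p ≤ Submodule.span ℂ (Set.range ![e₁, e₂]) := by
      rw [hp, Submodule.span_le]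
      rintro z hz
      simp only [Set.mem_insert_iff, Set.mem_singleton_iff] at hz
      rcases hz with hz | hz <;> rw [hz, SetLike.mem_coe]
      exacts [hvm, hwm]
    exact hle hup
  let bB : Module.Basis (Fin 2) ℂ V := Module.Basis.mk li2 hspan2
  have hb0 : bB 0 = e₁ := by rw [show bB 0 = ![e₁, e₂] 0 from Module.Basis.mk_apply li2 hspan2 0]; rfl
  have hb1 : bB 1 = e₂ := by rw [show bB 1 = ![e₁, e₂] 1 from Module.Basis.mk_apply li2 hspan2 1]; rfl
  set ε : ℂ := ζ - ζ⁻¹ with hεdef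
  set F : G → Matrix (Fin 2) (Fin 2) ℂ := fun g => LinearMap.toMatrix bB bB (ρ g) with hF
  have hFone : F 1 = 1 := by rw [hF]; simp only [map_one, LinearMap.toMatrix_one]
  have hFmul : ∀ g h : G, F (g * h) = F g * F h := by
    intro g h
    rw [hF]
    simp only [map_mul, LinearMap.toMatrix_mul]
  have hFx : F x = !![0, 1; 1, ε] := by
    have hlin : ρ x = Matrix.toLin bB bB !![0, 1; 1, ε] := by
      refine bB.ext fun i => ?_
      fin_cases i
      · show ρ x (bB 0) = Matrix.toLin bB bB !![0, 1; 1, ε] (bB 0)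
        rw [Matrix.toLin_self, Fin.sum_univ_two, hb0, hb1, he₁, he₂, map_add, hxv, hxw']
        simp only [Matrix.of_apply, Matrix.cons_val', Matrix.cons_val_zero, Matrix.cons_val_one,
          Matrix.head_cons, Matrix.empty_val', Matrix.cons_val_fin_one, Matrix.head_fin_const]
        module
      · show ρ x (bB 1) = Matrix.toLin bB bB !![0, 1; 1, ε] (bB 1)
        rw [Matrix.toLin_self, Fin.sum_univ_two, hb0, hb1, he₁, he₂, map_sub, map_smul, map_smul,
          hxv, hxw']
        simp only [Matrix.of_apply, Matrix.cons_val', Matrix.cons_val_zero, Matrix.cons_val_one,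
          Matrix.head_cons, Matrix.empty_val', Matrix.cons_val_fin_one, Matrix.head_fin_const]
        match_scalars
        · rw [hεdef]; linear_combination hmulinv
        · rw [hεdef]; linear_combination hmulinv
    rw [hF]
    show LinearMap.toMatrix bB bB (ρ x) = _
    rw [hlin, LinearMap.toMatrix_toLin]
  have hFy : F y = !![1, ε; 0, -1] := by
    have hlin : ρ y = Matrix.toLin bB bB !![1, ε; 0, -1] := by
      refine bB.ext fun i => ?_
      fin_cases i
      · show ρ y (bB 0) = Matrix.toLin bB bB !![1, ε; 0, -1] (bB 0)
        rw [Matrix.toLin_self, Fin.sum_univ_two, hb0, hb1, he₁, he₂, map_add, ← hw, hyw]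
        simp only [Matrix.of_apply, Matrix.cons_val', Matrix.cons_val_zero, Matrix.cons_val_one,
          Matrix.head_cons, Matrix.empty_val', Matrix.cons_val_fin_one, Matrix.head_fin_const]
        module
      · show ρ y (bB 1) = Matrix.toLin bB bB !![1, ε; 0, -1] (bB 1)
        rw [Matrix.toLin_self, Fin.sum_univ_two, hb0, hb1, he₁, he₂, map_sub, map_smul, map_smul,
          ← hw, hyw]
        simp only [Matrix.of_apply, Matrix.cons_val', Matrix.cons_val_zero, Matrix.cons_val_one,
          Matrix.head_cons, Matrix.empty_val', Matrix.cons_val_fin_one, Matrix.head_fin_const]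
        match_scalars
        · rw [hεdef]; ring
        · rw [hεdef]; ring
    rw [hF]
    show LinearMap.toMatrix bB bB (ρ y) = _
    rw [hlin, LinearMap.toMatrix_toLin]
  -- traces
  have htrace : ∀ g : G, LinearMap.trace ℂ V (ρ g) = Matrix.trace (F g) := by
    intro g
    rw [hF]
    exact LinearMap.trace_eq_matrix_trace ℂ bB (ρ g)
  have hεtr : LinearMap.trace ℂ V (ρ x) = ε := by
    rw [htrace, hFx, Matrix.trace_fin_two]
    simp
  have hεCF : ε ∈ charField ℚ ℂ ρ := by
    rw [← hεtr]
    exact IntermediateField.subset_adjoin ℚ _ ⟨x, rfl⟩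
  -- lifting over a subfield containing ε
  have hliftgen : ∀ (K : IntermediateField ℚ ℂ), ε ∈ K →
      ∀ g : G, ∃ M : Matrix (Fin 2) (Fin 2) K, M.map (algebraMap K ℂ) = F g := by
    intro K hK
    apply aux_lift x y hgen (algebraMap K ℂ) F hFone hFmul
    · refine ⟨!![0, 1; 1, ⟨ε, hK⟩], ?_⟩
      rw [hFx]
      ext i j
      fin_cases i <;> fin_cases j <;>
        simp [Matrix.map_apply, IntermediateField.algebraMap_apply]
    · refine ⟨!![1, ⟨ε, hK⟩; 0, -1], ?_⟩
      rw [hFy]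
      ext i j
      fin_cases i <;> fin_cases j <;>
        simp [Matrix.map_apply, IntermediateField.algebraMap_apply]
  have htrK : ∀ (K : IntermediateField ℚ ℂ) (M : Matrix (Fin 2) (Fin 2) K),
      Matrix.trace (M.map (algebraMap K ℂ)) = algebraMap K ℂ (Matrix.trace M) := by
    intro K M
    rw [Matrix.trace_fin_two, Matrix.trace_fin_two, Matrix.map_apply, Matrix.map_apply, map_add]
  -- the character field is ℚ(ε)
  have hCF : charField ℚ ℂ ρ = IntermediateField.adjoin ℚ {ε} := by
    apply le_antisymm
    · show IntermediateField.adjoin ℚ _ ≤ _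
      rw [IntermediateField.adjoin_le_iff]
      rintro c ⟨g, rfl⟩
      obtain ⟨Mg, hMg⟩ := hliftgen (IntermediateField.adjoin ℚ {ε})
        (IntermediateField.mem_adjoin_simple_self ℚ ε) g
      show LinearMap.trace ℂ V (ρ g) ∈ IntermediateField.adjoin ℚ {ε}
      rw [htrace, ← hMg, htrK]
      exact (Matrix.trace Mg).2
    · rw [IntermediateField.adjoin_le_iff]
      rintro c hc
      rw [Set.mem_singleton_iff] at hc
      rw [hc]
      exact hεCF
  constructor
  · -- character field statement
    intro ζ' hζ'
    have hN10 : N1 ≠ 0 := by positivity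
    have hdvd2 : 2 ∣ N1 := by omega
    rw [hCF, hεdef]
    apply le_antisymm
    · rw [IntermediateField.adjoin_le_iff]
      rintro c hc
      rw [Set.mem_singleton_iff] at hc
      rw [hc]
      exact aux_prim N1 hN10 hdvd2 ζ' ζ hζ' hζprim
    · rw [IntermediateField.adjoin_le_iff]
      rintro c hc
      rw [Set.mem_singleton_iff] at hc
      rw [hc]
      exact aux_prim N1 hN10 hdvd2 ζ ζ' hζprim hζ'
  · -- Schur index
    set K : IntermediateField ℚ ℂ := charField ℚ ℂ ρ with hKdef
    have hlift := hliftgen K hεCF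
    have hφinj : Function.Injective (algebraMap K ℂ) := (algebraMap K ℂ).injective
    have hΦinj : Function.Injective
        (fun M : Matrix (Fin 2) (Fin 2) K => M.map (algebraMap K ℂ)) := by
      intro A B hAB
      have h2 : ∀ i j, algebraMap K ℂ (A i j) = algebraMap K ℂ (B i j) := by
        intro i j
        have h3 := congrArg (fun M => M i j) hAB
        simpa [Matrix.map_apply] using h3
      ext i j : 2
      exact h2 i j
    choose Mf hMf using hlift
    have hσone : Mf 1 = 1 := by
      apply hΦinj
      show (Mf 1).map (algebraMap K ℂ) = _
      rw [hMf 1, hFone]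
      exact (Matrix.map_one _ (map_zero _) (map_one _)).symm
    have hσmul : ∀ g h : G, Mf (g * h) = Mf g * Mf h := by
      intro g h
      apply hΦinj
      show (Mf (g * h)).map (algebraMap K ℂ) = (Mf g * Mf h).map (algebraMap K ℂ)
      rw [Matrix.map_mul, hMf, hMf, hMf, hFmul]
    let σ : G →* Matrix (Fin 2) (Fin 2) K :=
      { toFun := Mf, map_one' := hσone, map_mul' := hσmul }
    have h1mem : 1 ∈ {m : ℕ | 0 < m ∧ ∃ d : ℕ,
        ∃ σ : G →* Matrix (Fin d) (Fin d) (charField ℚ ℂ ρ),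
          ∀ g : G, algebraMap (charField ℚ ℂ ρ) ℂ (Matrix.trace (σ g)) =
            (m : ℂ) * LinearMap.trace ℂ V (ρ g)} := by
      refine ⟨one_pos, 2, σ, fun g => ?_⟩
      rw [Nat.cast_one, one_mul, htrace g, ← hMf g, htrK]
      rfl
    show sInf _ = 1
    refine le_antisymm (Nat.sInf_le h1mem) ?_
    exact (Nat.sInf_mem (⟨1, h1mem⟩ : Set.Nonempty _)).1
end

section
/- Let G be a finite metabelian group with maximal abelian normal subgroup K containing G', and F a field of characteristic 0. If η and η' are irreducible F-representations of K whose kernels are core-free in G, then η and η' have the same inertia subgroup in G. -/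
open Polynomial
namespace S18
noncomputable section

variable {F : Type} [Field F] {H : Type} [CommGroup H]
variable {V : Type} [AddCommGroup V] [Module F V]
variable (η : Representation F H V)

def kerI : Ideal (MonoidAlgebra F H) := RingHom.ker η.asAlgebraHom.toRingHom

lemma mem_kerI {a : MonoidAlgebra F H} : a ∈ kerI η ↔ η.asAlgebraHom a = 0 :=
  RingHom.mem_ker

lemma smul_asModule (a : MonoidAlgebra F H) (x : η.asModule) :
    η.asModuleEquiv (a • x) = η.asAlgebraHom a (η.asModuleEquiv x) := rfl

lemma annihilator_eq_kerI :
    Module.annihilator (MonoidAlgebra F H) η.asModule = kerI η := by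
  ext a
  rw [Module.mem_annihilator, mem_kerI]
  constructor
  · intro h
    ext v
    have := h (η.asModuleEquiv.symm v)
    calc η.asAlgebraHom a v = η.asModuleEquiv (a • η.asModuleEquiv.symm v) := rfl
    _ = 0 := by rw [this]; rfl
  · intro h x
    apply η.asModuleEquiv.injective
    rw [smul_asModule, h]; rfl

lemma kerI_isMaximal [hs : IsSimpleModule (MonoidAlgebra F H) η.asModule] :
    (kerI η).IsMaximal ∧
      Nonempty (η.asModule ≃ₗ[MonoidAlgebra F H] (MonoidAlgebra F H ⧸ kerI η)) := by
  obtain ⟨I, hI, ⟨e⟩⟩ := isSimpleModule_iff_quot_maximal.mp hs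
  have hIe : I = kerI η := by
    rw [← annihilator_eq_kerI, e.annihilator_eq, I.annihilator_quotient]
  subst hIe
  exact ⟨hI, ⟨e⟩⟩

variable (τ : H ≃* H)

local notation "Φ" => (MonoidAlgebra.domCongr F F τ : MonoidAlgebra F H ≃ₐ[F] MonoidAlgebra F H)

/-- Forward: an intertwiner gives ideal stability. -/
lemma stab_of_T (T : V ≃ₗ[F] V) (hT : ∀ k v, T (η k v) = η (τ k) (T v)) :
    ∀ a : MonoidAlgebra F H, Φ a ∈ kerI η ↔ a ∈ kerI η := by
  have key : ∀ a : MonoidAlgebra F H, ∀ v : V,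
      T (η.asAlgebraHom a v) = η.asAlgebraHom (Φ a) (T v) := by
    intro a
    induction a using MonoidAlgebra.induction_on with
    | of k =>
      intro v
      rw [MonoidAlgebra.of_apply, MonoidAlgebra.domCongr_single,
        Representation.asAlgebraHom_single, Representation.asAlgebraHom_single,
        one_smul, one_smul]
      exact hT k v
    | add f g hf hg =>
      intro v
      rw [map_add, map_add]
      simp only [LinearMap.add_apply, map_add, hf, hg]
    | smul r f hf =>
      intro v
      rw [map_smul, map_smul]
      simp only [LinearMap.smul_apply, map_smul, hf]
  intro a
  rw [mem_kerI, mem_kerI]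
  constructor
  · intro h
    ext v
    have := key a v
    rw [h] at this
    simp only [LinearMap.zero_apply] at this
    exact (LinearEquiv.map_eq_zero_iff T).mp this
  · intro h
    ext v
    have := key a (T.symm v)
    rw [h] at this
    simp only [LinearMap.zero_apply, map_zero] at this
    simpa using this.symm

/-- Backward: ideal stability gives an intertwiner, using simplicity. -/
lemma T_of_stab [hs : IsSimpleModule (MonoidAlgebra F H) η.asModule]
    (hstab : ∀ a : MonoidAlgebra F H, Φ a ∈ kerI η ↔ a ∈ kerI η) :
    ∃ T : V ≃ₗ[F] V, ∀ k v, T (η k v) = η (τ k) (T v) := by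
  set A := MonoidAlgebra F H
  set m := kerI η with hm
  obtain ⟨hmax, ⟨γ⟩⟩ := kerI_isMaximal η
  have hmap : m = m.map ((Φ : A ≃+* A) : A →+* A) := by
    apply le_antisymm
    · intro a ha
      have h2 : Φ ((MonoidAlgebra.domCongr F F τ).symm a) ∈ m := by
        rw [AlgEquiv.apply_symm_apply]; exact ha
      have h3 : (MonoidAlgebra.domCongr F F τ).symm a ∈ m := (hstab _).mp h2
      have : a = Φ ((MonoidAlgebra.domCongr F F τ).symm a) :=
        (AlgEquiv.apply_symm_apply _ a).symm
      rw [this]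
      exact Ideal.mem_map_of_mem _ h3
    · rw [Ideal.map_le_iff_le_comap]
      intro a ha
      exact Ideal.mem_comap.mpr ((hstab a).mpr ha)
  let Φq : (A ⧸ m) ≃ₐ[F] (A ⧸ m) := Ideal.quotientEquivAlg m m Φ hmap
  have hΦq : ∀ a : A, Φq (Ideal.Quotient.mk m a) = Ideal.Quotient.mk m (Φ a) := by
    intro a
    exact Ideal.quotientEquiv_mk m m (Φ : A ≃+* A) hmap a
  have hsmulq : ∀ (a : A) (q : A ⧸ m), Φq (a • q) = (Φ a) • (Φq q) := by
    intro a q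
    obtain ⟨b, rfl⟩ := Ideal.Quotient.mk_surjective q
    have h1 : a • (Ideal.Quotient.mk m b) = Ideal.Quotient.mk m (a * b) := by
      rw [← smul_eq_mul, ← Ideal.Quotient.mk_eq_mk, ← Ideal.Quotient.mk_eq_mk,
        Submodule.Quotient.mk_smul]
    have h2 : (Φ a) • (Ideal.Quotient.mk m (Φ b)) = Ideal.Quotient.mk m (Φ a * Φ b) := by
      rw [← smul_eq_mul, ← Ideal.Quotient.mk_eq_mk, ← Ideal.Quotient.mk_eq_mk,
        Submodule.Quotient.mk_smul]
    rw [h1, hΦq, map_mul, ← h2, hΦq]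
  -- the intertwiner as an additive equivalence
  let Teq : V ≃+ V :=
    ((η.asModuleEquiv.symm.toAddEquiv.trans γ.toAddEquiv).trans Φq.toAddEquiv).trans
      (γ.symm.toAddEquiv.trans η.asModuleEquiv.toAddEquiv)
  have key : ∀ (a : A) (v : V),
      Teq (η.asAlgebraHom a v) = η.asAlgebraHom (Φ a) (Teq v) := by
    intro a v
    show η.asModuleEquiv (γ.symm (Φq (γ (η.asModuleEquiv.symm (η.asAlgebraHom a v))))) = _
    have h1 : η.asModuleEquiv.symm (η.asAlgebraHom a v) = a • η.asModuleEquiv.symm v := rfl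
    rw [h1, map_smul, hsmulq, map_smul, smul_asModule]
    rfl
  have hFlin : ∀ (c : F) (v : V), Teq (c • v) = c • Teq v := by
    intro c v
    have h1 : ∀ w : V, c • w = η.asAlgebraHom (algebraMap F A c) w := by
      intro w
      rw [AlgHom.commutes, Module.algebraMap_end_apply]
    rw [h1, key, AlgEquiv.commutes, ← h1]
  refine ⟨Teq.toLinearEquiv hFlin, fun k v => ?_⟩
  show Teq (η k v) = η (τ k) (Teq v)
  have h1 : η k = η.asAlgebraHom (MonoidAlgebra.of F H k) := (η.asAlgebraHom_of k).symm
  have h2 : η (τ k) = η.asAlgebraHom (Φ (MonoidAlgebra.of F H k)) := by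
    rw [MonoidAlgebra.of_apply, MonoidAlgebra.domCongr_single,
      Representation.asAlgebraHom_single, one_smul]
  rw [h1, h2, key]

/-- The canonical character `H →* (A ⧸ kerI η)`. -/
def lam : H →* (MonoidAlgebra F H ⧸ kerI η) :=
  (Ideal.Quotient.mk (kerI η)).toMonoidHom.comp (MonoidAlgebra.of F H)

lemma lam_apply (k : H) :
    lam η k = Ideal.Quotient.mk (kerI η) (MonoidAlgebra.of F H k) := rfl

lemma lam_eq_one_iff {k : H} : lam η k = 1 ↔ k ∈ η.asGroupHom.ker := by
  rw [MonoidHom.mem_ker]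
  have h1 : lam η k = 1 ↔ (MonoidAlgebra.of F H k) - 1 ∈ kerI η := by
    rw [lam_apply, ← map_one (Ideal.Quotient.mk (kerI η)),
      Ideal.Quotient.mk_eq_mk_iff_sub_mem]
  rw [h1, mem_kerI, map_sub, map_one, sub_eq_zero, Representation.asAlgebraHom_of]
  constructor
  · intro h
    exact Units.ext (by simpa [Representation.asGroupHom_apply] using h)
  · intro h
    have := congrArg (Units.val) h
    simpa [Representation.asGroupHom_apply] using this

/-- The canonical character into the units. -/
def lamu : H →* (MonoidAlgebra F H ⧸ kerI η)ˣ := (lam η).toHomUnits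

lemma lamu_val (k : H) : ((lamu η k : (MonoidAlgebra F H ⧸ kerI η)ˣ) : MonoidAlgebra F H ⧸ kerI η) = lam η k := rfl

lemma adjoin_range_lam :
    Algebra.adjoin F (Set.range (lam η)) = ⊤ := by
  rw [eq_top_iff]
  rintro x -
  obtain ⟨a, rfl⟩ := Ideal.Quotient.mk_surjective x
  induction a using MonoidAlgebra.induction_on with
  | of k => exact Algebra.subset_adjoin ⟨k, rfl⟩
  | add f g hf hg => rw [map_add]; exact Subalgebra.add_mem _ hf hg
  | smul r f hf =>
      rw [Algebra.smul_def, map_mul, ← Ideal.Quotient.algebraMap_eq,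
        ← IsScalarTower.algebraMap_apply]
      exact Subalgebra.mul_mem _ (Subalgebra.algebraMap_mem _ r) hf

section Counting

variable [Finite H]

set_option maxHeartbeats 1000000 in
set_option synthInstance.maxHeartbeats 1000000 in
lemma roots_eq_range [hs : IsSimpleModule (MonoidAlgebra F H) η.asModule]
    (hc1 : ∀ n : ℕ, 0 < n → (∀ k : H, k ^ n ∈ η.asGroupHom.ker) → ∀ k : H, k ^ n = 1) :
    rootsOfUnity (Monoid.exponent H) (MonoidAlgebra F H ⧸ kerI η) = (lamu η).range
      ∧ Nat.card ((lamu η).range) = Monoid.exponent H := by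
  set A := MonoidAlgebra F H
  set m := kerI η with hm
  haveI hmax : m.IsMaximal := (kerI_isMaximal η).1
  haveI : m.IsPrime := hmax.isPrime
  set E := A ⧸ m
  set μ : Subgroup Eˣ := (lamu η).range with hμ
  have hfin : Finite ↥μ := Set.Finite.to_subtype (Set.finite_range (lamu η))
  haveI := hfin
  haveI hcyc : IsCyclic ↥μ := subgroup_units_cyclic μ
  haveI : Nonempty ↥μ := ⟨1⟩
  set n := Nat.card ↥μ with hn
  have hnpos : 0 < n := Nat.card_pos
  have hepos : 0 < Monoid.exponent H := Nat.pos_of_ne_zero Monoid.exponent_ne_zero_of_finite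
  have hkn : ∀ k : H, lamu η k ^ n = 1 := by
    intro k
    have h0 : (⟨lamu η k, ⟨k, rfl⟩⟩ : ↥μ) ^ n = 1 := pow_card_eq_one'
    have := congrArg (Subgroup.subtype μ) h0
    simpa using this
  have hen : Monoid.exponent H ∣ n := by
    apply Monoid.exponent_dvd_of_forall_pow_eq_one
    apply hc1 n hnpos
    intro k
    rw [← lam_eq_one_iff]
    have h0 : lamu η (k ^ n) = 1 := by rw [map_pow]; exact hkn k
    have := congrArg (Units.val) h0
    simpa [lamu_val] using this
  have hne : n ∣ Monoid.exponent H := by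
    rw [hn, ← IsCyclic.exponent_eq_card]
    apply Monoid.exponent_dvd_of_forall_pow_eq_one
    rintro ⟨y, k, rfl⟩
    apply Subtype.ext
    show lamu η k ^ (Monoid.exponent H) = 1
    rw [← map_pow, Monoid.pow_exponent_eq_one, map_one]
  have hcard : n = Monoid.exponent H := Nat.dvd_antisymm hne hen
  have hle : μ ≤ rootsOfUnity (Monoid.exponent H) E := by
    rintro y ⟨k, rfl⟩
    rw [mem_rootsOfUnity, ← map_pow, Monoid.pow_exponent_eq_one, map_one]
  have heq : μ = rootsOfUnity (Monoid.exponent H) E := by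
    have hsub : (μ : Set Eˣ) ⊆ (rootsOfUnity (Monoid.exponent H) E : Set Eˣ) := hle
    have hfinroots : Finite ↥(rootsOfUnity (Monoid.exponent H) E : Set Eˣ) := by
      have : Fintype ↥(rootsOfUnity (Monoid.exponent H) E) :=
        Fintype.ofFinite _
      exact Finite.of_fintype _
    have hncard : (rootsOfUnity (Monoid.exponent H) E : Set Eˣ).ncard ≤ (μ : Set Eˣ).ncard := by
      rw [← Nat.card_coe_set_eq, ← Nat.card_coe_set_eq]
      have h1 : Nat.card ↥(rootsOfUnity (Monoid.exponent H) E) ≤ Monoid.exponent H := by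
        exact card_rootsOfUnity E (Monoid.exponent H)
      calc Nat.card ↥((rootsOfUnity (Monoid.exponent H) E) : Set Eˣ)
          = Nat.card ↥(rootsOfUnity (Monoid.exponent H) E) := rfl
        _ ≤ Monoid.exponent H := h1
        _ = Nat.card ↥μ := hcard.symm
        _ = Nat.card ↥(μ : Set Eˣ) := rfl
    haveI := hfinroots
    exact SetLike.coe_injective
      (Set.eq_of_subset_of_ncard_le hsub hncard (Set.toFinite _))
  exact ⟨heq.symm, hcard⟩

set_option maxHeartbeats 1000000 in
set_option synthInstance.maxHeartbeats 1000000 in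
lemma isCyclo [hs : IsSimpleModule (MonoidAlgebra F H) η.asModule]
    (hc1 : ∀ n : ℕ, 0 < n → (∀ k : H, k ^ n ∈ η.asGroupHom.ker) → ∀ k : H, k ^ n = 1)
    (e : ℕ+) (hexp : (e : ℕ) = Monoid.exponent H) :
    IsCyclotomicExtension {(e : ℕ)} F (MonoidAlgebra F H ⧸ kerI η) := by
  obtain ⟨hroots, hcard⟩ := roots_eq_range η hc1
  set E := MonoidAlgebra F H ⧸ kerI η
  set μ : Subgroup Eˣ := (lamu η).range with hμ
  haveI hfin : Finite ↥μ := Set.Finite.to_subtype (Set.finite_range (lamu η))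
  haveI : Fintype ↥μ := Fintype.ofFinite _
  haveI hcyc : IsCyclic ↥μ := by
    haveI hmax : (kerI η).IsMaximal := (kerI_isMaximal η).1
    haveI : (kerI η).IsPrime := hmax.isPrime
    exact subgroup_units_cyclic μ
  constructor
  · rintro n hn hn'
    rw [Set.mem_singleton_iff] at hn
    subst hn
    obtain ⟨g, hg⟩ := IsCyclic.exists_generator (α := ↥μ)
    have h1 : orderOf g = Nat.card ↥μ := by
      rw [orderOf_eq_card_of_forall_mem_zpowers hg, Nat.card_eq_fintype_card]
    have h2 : orderOf ((μ.subtype) g) = (e : ℕ) := by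
      rw [orderOf_injective μ.subtype μ.subtype_injective g, h1, hcard, hexp]
    have h3 : IsPrimitiveRoot ((g : Eˣ) : E) (e : ℕ) := by
      apply IsPrimitiveRoot.coe_units_iff.mpr
      rw [← h2]
      exact IsPrimitiveRoot.orderOf _
    exact ⟨_, h3⟩
  · intro x
    have htop := adjoin_range_lam η
    have hmono : Set.range (lam η) ⊆ {b : E | ∃ n : ℕ, n ∈ ({(e : ℕ)} : Set ℕ) ∧ n ≠ 0 ∧ b ^ n = 1} := by
      rintro y ⟨k, rfl⟩
      refine ⟨e, rfl, e.ne_zero, ?_⟩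
      rw [← map_pow, hexp, Monoid.pow_exponent_eq_one, map_one]
    have := Algebra.adjoin_mono (R := F) hmono
    rw [htop] at this
    exact this (by trivial)

end Counting

section FieldTransfer

/-- Transport a "power `t` on roots of unity" automorphism between two cyclotomic
extensions of `F`. -/
lemma exists_conj_aut (e : ℕ+) (E E' : Type) [Field E] [Field E'] [Algebra F E] [Algebra F E']
    [IsCyclotomicExtension {(e : ℕ)} F E] [IsCyclotomicExtension {(e : ℕ)} F E']
    (σ : E ≃ₐ[F] E) (t : ℤ)
    (hσ : ∀ u : Eˣ, u ^ (e : ℕ) = 1 → σ (u : E) = ((u : E)) ^ t) :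
    ∃ σ' : E' ≃ₐ[F] E', ∀ u : E'ˣ, u ^ (e : ℕ) = 1 → σ' (u : E') = ((u : E')) ^ t := by
  let ψ : E ≃ₐ[F] E' := IsCyclotomicExtension.algEquiv {(e : ℕ)} F E E'
  refine ⟨(ψ.symm.trans σ).trans ψ, ?_⟩
  intro u hu
  have hu' : ((u : E') : E')^(e : ℕ) = 1 := by
    rw [← Units.val_pow_eq_pow_val, hu, Units.val_one]
  have hne : ((u : E') : E') ≠ 0 := Units.ne_zero u
  set w : E := ψ.symm (u : E') with hw
  have hwu : IsUnit w := by
    apply IsUnit.of_mul_eq_one (ψ.symm ((u⁻¹ : E'ˣ) : E'))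
    rw [hw, ← map_mul]
    simp
  have hwpow : (hwu.unit : Eˣ) ^ (e : ℕ) = 1 := by
    apply Units.ext
    rw [Units.val_pow_eq_pow_val, IsUnit.unit_spec, hw, ← map_pow, hu', map_one, Units.val_one]
  have h1 := hσ hwu.unit hwpow
  rw [IsUnit.unit_spec] at h1
  show ψ (σ (ψ.symm (u : E'))) = _
  rw [← hw, h1, map_zpow₀, hw, AlgEquiv.apply_symm_apply]

end FieldTransfer

section Transfer

variable [Finite H]

set_option maxHeartbeats 2000000 in
set_option synthInstance.maxHeartbeats 1000000 in
lemma transfer {V' : Type} [AddCommGroup V'] [Module F V']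
    (η' : Representation F H V')
    [IsSimpleModule (MonoidAlgebra F H) η.asModule]
    [IsSimpleModule (MonoidAlgebra F H) η'.asModule]
    (τ : H ≃* H)
    (hc1 : ∀ n : ℕ, 0 < n → (∀ k : H, k ^ n ∈ η.asGroupHom.ker) → ∀ k : H, k ^ n = 1)
    (hc1' : ∀ n : ℕ, 0 < n → (∀ k : H, k ^ n ∈ η'.asGroupHom.ker) → ∀ k : H, k ^ n = 1)
    (hc2 : ∀ t : ℤ, (∀ k : H, τ k * (k ^ t)⁻¹ ∈ η.asGroupHom.ker) → ∀ k : H, τ k = k ^ t)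
    (hstab : ∀ a : MonoidAlgebra F H,
      MonoidAlgebra.domCongr F F τ a ∈ kerI η ↔ a ∈ kerI η) :
    ∀ a : MonoidAlgebra F H,
      MonoidAlgebra.domCongr F F τ a ∈ kerI η' ↔ a ∈ kerI η' := by
  classical
  set A := MonoidAlgebra F H
  set m := kerI η with hmdef
  set m' := kerI η' with hm'def
  haveI hmax : m.IsMaximal := (kerI_isMaximal η).1
  haveI hmax' : m'.IsMaximal := (kerI_isMaximal η').1
  letI : Field (A ⧸ m) := Ideal.Quotient.field m
  letI : Field (A ⧸ m') := Ideal.Quotient.field m'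
  have hepos : 0 < Monoid.exponent H := Nat.pos_of_ne_zero Monoid.exponent_ne_zero_of_finite
  set e : ℕ+ := ⟨Monoid.exponent H, hepos⟩ with hedef
  have hexp : (e : ℕ) = Monoid.exponent H := rfl
  haveI hcyE : IsCyclotomicExtension {(e : ℕ)} F (A ⧸ m) := isCyclo η hc1 e hexp
  haveI hcyE' : IsCyclotomicExtension {(e : ℕ)} F (A ⧸ m') := isCyclo η' hc1' e hexp
  -- the automorphism σ of A⧸m induced by Φm
  set Φm := (MonoidAlgebra.domCongr F F τ : MonoidAlgebra F H ≃ₐ[F] MonoidAlgebra F H) with hΦmdef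
  have hmap : m = m.map ((Φm : A ≃+* A) : A →+* A) := by
    apply le_antisymm
    · intro a ha
      have h2 : Φm (Φm.symm a) ∈ m := by rw [AlgEquiv.apply_symm_apply]; exact ha
      have h3 : Φm.symm a ∈ m := (hstab _).mp h2
      have h4 : a = Φm (Φm.symm a) := (AlgEquiv.apply_symm_apply _ a).symm
      rw [h4]
      exact Ideal.mem_map_of_mem _ h3
    · rw [Ideal.map_le_iff_le_comap]
      intro a ha
      exact Ideal.mem_comap.mpr ((hstab a).mpr ha)
  set σ : (A ⧸ m) ≃ₐ[F] (A ⧸ m) := Ideal.quotientEquivAlg m m Φm hmap with hσdef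
  have hσ : ∀ a : A, σ (Ideal.Quotient.mk m a) = Ideal.Quotient.mk m (Φm a) := fun a =>
    Ideal.quotientEquiv_mk m m (Φm : A ≃+* A) hmap a
  have hσlam : ∀ k : H, σ (lam η k) = lam η (τ k) := by
    intro k
    rw [lam_apply, lam_apply, hσ]
    congr 1
    rw [MonoidAlgebra.of_apply, MonoidAlgebra.of_apply, hΦmdef]
    exact MonoidAlgebra.domCongr_single τ k 1
  -- extract the power t
  haveI : (kerI η).IsPrime := hmax.isPrime
  haveI : IsCyclic ↥(rootsOfUnity (e : ℕ) (A ⧸ m)) := rootsOfUnity.isCyclic (A ⧸ m) (e : ℕ)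
  obtain ⟨t, ht⟩ := MonoidHom.map_cyclic (restrictRootsOfUnity σ (e : ℕ))
  have htE : ∀ u : (A ⧸ m)ˣ, u ^ (e : ℕ) = 1 → σ (u : A ⧸ m) = ((u : A ⧸ m)) ^ t := by
    intro u hu
    have hmem : u ∈ rootsOfUnity (e : ℕ) (A ⧸ m) := (mem_rootsOfUnity _ u).mpr hu
    have h0 := ht ⟨u, hmem⟩
    have h1 : ((restrictRootsOfUnity σ (e : ℕ)) ⟨u, hmem⟩ : (A ⧸ m)ˣ) = u ^ t := by
      have h1' := congrArg (Subgroup.subtype _) h0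
      rw [map_zpow] at h1'
      exact h1'
    have h3 := congrArg (Units.val) h1
    simpa [Units.val_zpow_eq_zpow_val, Units.coe_map] using h3
  -- τ is raising to the t-th power
  have hτ : ∀ k : H, τ k = k ^ t := by
    apply hc2
    intro k
    rw [← lam_eq_one_iff]
    have hu : (lamu η k) ^ (e : ℕ) = 1 := by
      rw [← map_pow, hexp, Monoid.pow_exponent_eq_one, map_one]
    have h1 : σ (lam η k) = (lam η k) ^ t := htE (lamu η k) hu
    have h2 : lam η (τ k) = (lam η k) ^ t := by rw [← hσlam, h1]
    have h3 : lamu η (τ k) = (lamu η k) ^ t := by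
      apply Units.ext
      rw [Units.val_zpow_eq_zpow_val]
      exact h2
    have h4 : lamu η (τ k * (k ^ t)⁻¹) = 1 := by
      rw [map_mul, map_inv, map_zpow, h3]
      group
    have h5 := congrArg (Units.val) h4
    exact h5
  -- transport σ to A⧸m'
  obtain ⟨σ', hσ'⟩ := exists_conj_aut e (A ⧸ m) (A ⧸ m') σ t htE
  have hσ'lam : ∀ k : H, σ' (lam η' k) = lam η' (τ k) := by
    intro k
    have hu : (lamu η' k) ^ (e : ℕ) = 1 := by
      rw [← map_pow, hexp, Monoid.pow_exponent_eq_one, map_one]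
    have h1 : σ' (lam η' k) = (lam η' k) ^ t := hσ' (lamu η' k) hu
    have h2 : lamu η' (τ k) = (lamu η' k) ^ t := by rw [hτ k, map_zpow]
    have h3 := congrArg (Units.val) h2
    rw [Units.val_zpow_eq_zpow_val] at h3
    rw [h1]
    exact h3.symm
  -- conclude stability of m'
  have halg : (Ideal.Quotient.mkₐ F m').comp Φm.toAlgHom
      = (σ'.toAlgHom).comp (Ideal.Quotient.mkₐ F m') := by
    apply MonoidAlgebra.algHom_ext
    intro k
    have h1 : Φm (MonoidAlgebra.single k (1:F)) = MonoidAlgebra.single (τ k) 1 :=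
      MonoidAlgebra.domCongr_single τ k 1
    show Ideal.Quotient.mkₐ F m' (Φm (MonoidAlgebra.single k 1))
        = σ' (Ideal.Quotient.mkₐ F m' (MonoidAlgebra.single k 1))
    rw [h1]
    show lam η' (τ k) = σ' (lam η' k)
    exact (hσ'lam k).symm
    exact Subsingleton.elim _ _
  intro a
  have hcomm : Ideal.Quotient.mk m' (Φm a) = σ' (Ideal.Quotient.mk m' a) := by
    have := congrArg (fun f => f a) halg
    simpa using this
  constructor
  · intro h
    rw [hmdef] at *
    have h0 : Ideal.Quotient.mk m' (Φm a) = 0 := Ideal.Quotient.eq_zero_iff_mem.mpr h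
    rw [hcomm] at h0
    have h1 : σ' (Ideal.Quotient.mk m' a) = σ' 0 := by rw [h0, map_zero]
    have h2 := σ'.injective h1
    exact Ideal.Quotient.eq_zero_iff_mem.mp h2
  · intro h
    have h0 : Ideal.Quotient.mk m' a = 0 := Ideal.Quotient.eq_zero_iff_mem.mpr h
    apply Ideal.Quotient.eq_zero_iff_mem.mp
    rw [hcomm, h0, map_zero]

end Transfer

end
end S18


/-- Let `G` be a finite metabelian group with maximal abelian normal subgroup `K`
containing `G'`, and `F` a field of characteristic 0. If `η` and `η'` are irreducible
`F`-representations of `K` whose kernels are core-free in `G`, then `η` and `η'` have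
the same inertia subgroup in `G`: for every `g ∈ G`, the conjugate `η^g` is equivalent
to `η` iff `η'^g` is equivalent to `η'`. -/
theorem stmt_18 (G : Type) [Group G] [Finite G]
    (hmeta : ∀ a b : commutator G, a * b = b * a)
    (K : Subgroup G) (hKn : K.Normal)
    (hKab : ∀ a b : G, a ∈ K → b ∈ K → a * b = b * a)
    (hGK : commutator G ≤ K)
    (hmax : ∀ K' : Subgroup G, K'.Normal →
      (∀ a b : G, a ∈ K' → b ∈ K' → a * b = b * a) → K ≤ K' → K' = K)
    (F : Type) [Field F] [CharZero F]
    (Vη Vη' : Type) [AddCommGroup Vη] [Module F Vη] [FiniteDimensional F Vη]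
    [AddCommGroup Vη'] [Module F Vη'] [FiniteDimensional F Vη']
    (η : Representation F K Vη)
    (hirr : IsSimpleModule (MonoidAlgebra F K) η.asModule)
    (η' : Representation F K Vη')
    (hirr' : IsSimpleModule (MonoidAlgebra F K) η'.asModule)
    -- the kernels of `η` and `η'` are core-free in `G`:
    (hcore : ∀ N : Subgroup G, N.Normal →
      N ≤ Subgroup.map K.subtype (η.asGroupHom.ker) → N = ⊥)
    (hcore' : ∀ N : Subgroup G, N.Normal →
      N ≤ Subgroup.map K.subtype (η'.asGroupHom.ker) → N = ⊥) :
    ∀ g : G,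
      (∃ T : Vη ≃ₗ[F] Vη, ∀ k : K, ∀ v : Vη,
        T (η k v) = η ⟨g * (k : G) * g⁻¹, hKn.conj_mem (k : G) k.2 g⟩ (T v)) ↔
      (∃ T : Vη' ≃ₗ[F] Vη', ∀ k : K, ∀ v : Vη',
        T (η' k v) = η' ⟨g * (k : G) * g⁻¹, hKn.conj_mem (k : G) k.2 g⟩ (T v)) := by
  letI : CommGroup ↥K :=
    { (inferInstance : Group ↥K) with
      mul_comm := fun a b => Subtype.ext (hKab _ _ a.2 b.2) }
  haveI : IsSimpleModule (MonoidAlgebra F ↥K) η.asModule := hirr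
  haveI : IsSimpleModule (MonoidAlgebra F ↥K) η'.asModule := hirr'
  -- normal closure helper
  have hnormal : ∀ S : Set G, (∀ x ∈ S, ∀ y : G, y * x * y⁻¹ ∈ S) →
      (Subgroup.closure S).Normal := by
    intro S hS
    constructor
    intro x hx y
    induction hx using Subgroup.closure_induction with
    | mem z hz => exact Subgroup.subset_closure (hS z hz y)
    | one => simpa using Subgroup.one_mem _
    | mul a b _ _ ha hb =>
        have : y * (a * b) * y⁻¹ = (y * a * y⁻¹) * (y * b * y⁻¹) := by group
        rw [this]
        exact Subgroup.mul_mem _ ha hb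
    | inv a _ ha =>
        have : y * a⁻¹ * y⁻¹ = (y * a * y⁻¹)⁻¹ := by group
        rw [this]
        exact Subgroup.inv_mem _ ha
  intro g
  set τ : ↥K ≃* ↥K := MulAut.conjNormal g with hτdef
  have hτcoe : ∀ k : ↥K, ((τ k : ↥K) : G) = g * k * g⁻¹ := fun k =>
    MulAut.conjNormal_apply g k
  have hsub : ∀ k : ↥K,
      (⟨g * (k : G) * g⁻¹, hKn.conj_mem (k : G) k.2 g⟩ : ↥K) = τ k :=
    fun k => Subtype.ext (hτcoe k).symm
  -- first core-free consequence
  have hc1gen : ∀ (J : Subgroup ↥K),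
      (∀ N : Subgroup G, N.Normal → N ≤ Subgroup.map K.subtype J → N = ⊥) →
      ∀ n : ℕ, 0 < n → (∀ k : ↥K, k ^ n ∈ J) → ∀ k : ↥K, k ^ n = 1 := by
    intro J hJ n hn h
    set S : Set G := {x | ∃ k : ↥K, x = (k : G) ^ n} with hSdef
    have hSconj : ∀ x ∈ S, ∀ y : G, y * x * y⁻¹ ∈ S := by
      rintro x ⟨k, rfl⟩ y
      refine ⟨⟨y * k * y⁻¹, hKn.conj_mem _ k.2 y⟩, ?_⟩
      show y * (k : G) ^ n * y⁻¹ = (y * (k : G) * y⁻¹) ^ n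
      rw [conj_pow]
    have hle : Subgroup.closure S ≤ Subgroup.map K.subtype J := by
      rw [Subgroup.closure_le]
      rintro x ⟨k, rfl⟩
      exact ⟨k ^ n, h k, by simp⟩
    have hbot : Subgroup.closure S = ⊥ := hJ _ (hnormal S hSconj) hle
    intro k
    have hx : ((k : G)) ^ n ∈ Subgroup.closure S := Subgroup.subset_closure ⟨k, rfl⟩
    rw [hbot, Subgroup.mem_bot] at hx
    exact Subtype.ext (by simpa using hx)
  -- second core-free consequence
  have hc2gen : ∀ (J : Subgroup ↥K),
      (∀ N : Subgroup G, N.Normal → N ≤ Subgroup.map K.subtype J → N = ⊥) →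
      ∀ t : ℤ, (∀ k : ↥K, τ k * (k ^ t)⁻¹ ∈ J) → ∀ k : ↥K, τ k = k ^ t := by
    intro J hJ t h
    set S : Set G := {x | ∃ k : ↥K, x = g * (k : G) * g⁻¹ * (((k : G)) ^ t)⁻¹} with hSdef
    have hSconj : ∀ x ∈ S, ∀ y : G, y * x * y⁻¹ ∈ S := by
      rintro x ⟨k, rfl⟩ y
      refine ⟨⟨y * k * y⁻¹, hKn.conj_mem _ k.2 y⟩, ?_⟩
      show y * (g * (k : G) * g⁻¹ * (((k : G)) ^ t)⁻¹) * y⁻¹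
          = g * (y * (k : G) * y⁻¹) * g⁻¹ * ((y * (k : G) * y⁻¹) ^ t)⁻¹
      have hc : y * g * y⁻¹ * g⁻¹ ∈ K := by
        apply hGK
        exact Subgroup.commutator_mem_commutator (Subgroup.mem_top y) (Subgroup.mem_top g)
      have hw : g * (y * (k : G) * y⁻¹) * g⁻¹ ∈ K :=
        hKn.conj_mem _ (hKn.conj_mem _ k.2 y) g
      have hcomm : (y * g * y⁻¹ * g⁻¹) * (g * (y * (k : G) * y⁻¹) * g⁻¹)
          = (g * (y * (k : G) * y⁻¹) * g⁻¹) * (y * g * y⁻¹ * g⁻¹) :=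
        hKab _ _ hc hw
      have h1 : y * g * (k : G) * g⁻¹ * y⁻¹ = g * (y * (k : G) * y⁻¹) * g⁻¹ := by
        have e1 : y * g * (k : G) * g⁻¹ * y⁻¹
            = (y * g * y⁻¹ * g⁻¹) * (g * (y * (k : G) * y⁻¹) * g⁻¹) * (y * g * y⁻¹ * g⁻¹)⁻¹ := by
          group
        rw [e1, hcomm]
        group
      calc y * (g * (k : G) * g⁻¹ * (((k : G)) ^ t)⁻¹) * y⁻¹
          = (y * g * (k : G) * g⁻¹ * y⁻¹) * (y * ((k : G) ^ t)⁻¹ * y⁻¹) := by group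
        _ = (g * (y * (k : G) * y⁻¹) * g⁻¹) * ((y * (k : G) * y⁻¹) ^ t)⁻¹ := by
            rw [h1, conj_zpow]
            group
    have hle : Subgroup.closure S ≤ Subgroup.map K.subtype J := by
      rw [Subgroup.closure_le]
      rintro x ⟨k, rfl⟩
      refine ⟨τ k * (k ^ t)⁻¹, h k, ?_⟩
      show ((τ k * (k ^ t)⁻¹ : ↥K) : G) = _
      rw [Subgroup.coe_mul, hτcoe k]
      norm_cast
    have hbot : Subgroup.closure S = ⊥ := hJ _ (hnormal S hSconj) hle
    intro k
    have hx : g * (k : G) * g⁻¹ * (((k : G)) ^ t)⁻¹ ∈ Subgroup.closure S :=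
      Subgroup.subset_closure ⟨k, rfl⟩
    rw [hbot, Subgroup.mem_bot] at hx
    apply Subtype.ext
    rw [hτcoe k]
    have : g * (k : G) * g⁻¹ = ((k : G)) ^ t := by
      have := mul_inv_eq_one.mp hx
      exact this
    rw [this]
    norm_cast
  constructor
  · rintro ⟨T, hT⟩
    have hstab := S18.stab_of_T η τ T (fun k v => by rw [← hsub k]; exact hT k v)
    have hstab' := S18.transfer η η' τ
      (hc1gen _ hcore) (hc1gen _ hcore') (hc2gen _ hcore) hstab
    obtain ⟨T', hT'⟩ := S18.T_of_stab η' τ hstab'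
    exact ⟨T', fun k v => by rw [hsub k]; exact hT' k v⟩
  · rintro ⟨T, hT⟩
    have hstab := S18.stab_of_T η' τ T (fun k v => by rw [← hsub k]; exact hT k v)
    have hstab' := S18.transfer η' η τ
      (hc1gen _ hcore') (hc1gen _ hcore) (hc2gen _ hcore') hstab
    obtain ⟨T', hT'⟩ := S18.T_of_stab η τ hstab'
    exact ⟨T', fun k v => by rw [hsub k]; exact hT' k v⟩
end
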